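/- arXiv:2106.04288 — 6 statements merged into one kernel-verified Lean document; each statement's English description precedes it below -/
import Mathlib

section
/- lim_{s→∞} (1/(s log s)) Σ_{k=1}^{s−1} 1/sin(kπ/s) = 2/π, where s ranges over the integers s ≥ 2. -/
noncomputable section

open MeasureTheory Real Filter

/-- ℝ³ as a Euclidean space. -/
abbrev R3 : Type := EuclideanSpace ℝ (Fin 3)

/-- The point (a, b, c) ∈ ℝ³. -/
def pt (a b c : ℝ) : R3 := (WithLp.equiv 2 (Fin 3 → ℝ)).symm ![a, b, c]

/-- The Laplacian of `f : ℝ³ → ℝ`, as the sum of the second partial derivatives. -/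
def lap (f : R3 → ℝ) (x : R3) : ℝ :=
  ∑ i : Fin 3, fderiv ℝ (fun y => fderiv ℝ f y (EuclideanSpace.single i 1)) x
    (EuclideanSpace.single i 1)

/-- The Schrödinger–Newton ground state: a pair (U, Ψ) of positive, radially
symmetric C² functions solving ΔU − U + ΨU = 0, ΔΨ + (1/2)U² = 0 on ℝ³,
tending to 0 at infinity, with U(0) = max U, U strictly decreasing in |x| and
|x|e^{|x|}U(x) → λ₀ > 0 as |x| → ∞. -/
structure GroundState (U Ψ : R3 → ℝ) : Prop where
  smoothU : ContDiff ℝ 2 U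
  smoothΨ : ContDiff ℝ 2 Ψ
  posU : ∀ x, 0 < U x
  posΨ : ∀ x, 0 < Ψ x
  radU : ∀ x y : R3, ‖x‖ = ‖y‖ → U x = U y
  radΨ : ∀ x y : R3, ‖x‖ = ‖y‖ → Ψ x = Ψ y
  maxU : ∀ x, U x ≤ U 0
  eqU : ∀ x, lap U x - U x + Ψ x * U x = 0
  eqΨ : ∀ x, lap Ψ x + (1/2) * (U x)^2 = 0
  limU : ∀ ε > 0, ∃ R : ℝ, ∀ x : R3, R ≤ ‖x‖ → |U x| ≤ ε
  limΨ : ∀ ε > 0, ∃ R : ℝ, ∀ x : R3, R ≤ ‖x‖ → |Ψ x| ≤ ε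
  decU : ∀ x y : R3, ‖x‖ < ‖y‖ → U y < U x
  decayU : ∃ lam₀ > (0:ℝ), ∀ ε > 0, ∃ R : ℝ, ∀ x : R3, R ≤ ‖x‖ →
    |‖x‖ * Real.exp ‖x‖ * U x - lam₀| ≤ ε

/-- Condition (H) on the radial potential V, with constants V₀, a, θ, m. -/
def CondH (V : ℝ → ℝ) (V₀ a θ m : ℝ) : Prop :=
  ContinuousOn V (Set.Ioi 0) ∧
  (∃ Cb : ℝ, ∀ ρ ∈ Set.Ioi (0:ℝ), |V ρ| ≤ Cb) ∧
  0 < V₀ ∧ 0 < a ∧ 0 < θ ∧ 1/2 ≤ m ∧ m < 1 ∧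
  (∀ ρ ∈ Set.Ioi (0:ℝ), V₀ ≤ V ρ) ∧
  ∃ C_V > (0:ℝ), ∃ R₀ > (0:ℝ), ∀ ρ : ℝ, R₀ ≤ ρ →
    |V ρ - V₀ - a * ρ ^ (-m)| ≤ C_V * ρ ^ (-(m + θ))

/-- The spike locations ξ_i = (r cos(2iπ/s), r sin(2iπ/s), 0), i = 0, …, s−1
(indexed from 0, so that here `xiP s r 0` is ξ₁ of the paper and the spike
`xiP s r (i-1)` is ξ_i of the paper). -/
def xiP (s : ℕ) (r : ℝ) (i : ℕ) : R3 :=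
  pt (r * Real.cos (2 * π * i / s)) (r * Real.sin (2 * π * i / s)) 0

/-- Rotation by angle θ about the x₃-axis. -/
def rotZ (θ : ℝ) (x : R3) : R3 :=
  pt (Real.cos θ * x 0 - Real.sin θ * x 1) (Real.sin θ * x 0 + Real.cos θ * x 1) (x 2)

/-- The sum of bumps U_r = Σ_{i} U(· − ξ_i). -/
def Ur (U : R3 → ℝ) (s : ℕ) (r : ℝ) (x : R3) : ℝ :=
  ∑ i ∈ Finset.range s, U (x - xiP s r i)

/-- Z_i(x) = −∇U(x−ξ_i)·(cos θ_i, sin θ_i, 0) = ∂/∂r of U(· − ξ_i). -/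
def Zfun (U : R3 → ℝ) (s : ℕ) (r : ℝ) (i : ℕ) (x : R3) : ℝ :=
  -(inner ℝ (gradient U (x - xiP s r i))
      (pt (Real.cos (2 * π * i / s)) (Real.sin (2 * π * i / s)) 0) : ℝ)

/-- Membership in the symmetry class 𝓔_s with the orthogonality conditions. -/
def memEs (U : R3 → ℝ) (s : ℕ) (r : ℝ) (w : R3 → ℝ) : Prop :=
  (∀ x : R3, w (pt (x 0) (-(x 1)) (x 2)) = w x) ∧
  (∀ x : R3, w (pt (x 0) (x 1) (-(x 2))) = w x) ∧
  (∀ x : R3, w (rotZ (2 * π / s) x) = w x) ∧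
  (∀ i ∈ Finset.range s,
    ∫ x : R3, (∫ y : R3,
      ((U (y - xiP s r i))^2 * Zfun U s r i x
        + 2 * U (y - xiP s r i) * Zfun U s r i y * U (x - xiP s r i)) * w x / ‖x - y‖) = 0)

/-!
On `(0, π)`, `1 / sin x` differs from the principal parts `1 / x + 1 / (π - x)` of its poles
by at most `1`. At `x = kπ/s` the poles contribute `(s/π) (1/k + 1/(s-k))`, whose sum over `k`
is `(2s/π) H_{s-1}`, while the errors add up to at most `s`. Since `H_{s-1} ∼ log s`, dividing
by `s log s` leaves `2/π`.
-/

open Finset Topology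

namespace Real

lemma one_div_sin_le_one_div_add_one {x : ℝ} (hx0 : 0 < x) (hx2 : x ≤ 2) :
    1 / sin x ≤ 1 / x + 1 := by
  have hsin := sin_gt_sub_cube hx0
  have hcube : 0 ≤ x ^ 2 * (6 - x - x ^ 2) := by
    have : 0 ≤ 6 - x - x ^ 2 := by nlinarith
    positivity
  have hsin_pos : 0 < sin x := by nlinarith
  -- `(x - x³/6)(1 + x) - x = x² (6 - x - x²) / 6`
  have key : x ≤ sin x * (1 + x) := by nlinarith
  rw [div_add_one hx0.ne', div_le_div_iff₀ hsin_pos hx0]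
  linarith

lemma abs_one_div_sin_sub_le {x : ℝ} (hx0 : 0 < x) (hxπ : x < π) :
    |1 / sin x - (1 / x + 1 / (π - x))| ≤ 1 := by
  wlog hx : x ≤ π / 2 generalizing x
  · have := this (sub_pos.2 hxπ) (by linarith) (by linarith)
    rwa [sin_pi_sub, sub_sub_cancel, add_comm (1 / (π - x))] at this
  have hsin_pos : 0 < sin x := sin_pos_of_pos_of_lt_pi hx0 hxπ
  have hlower : 1 / x ≤ 1 / sin x := one_div_le_one_div_of_le hsin_pos (sin_le hx0.le)
  have hupper : 1 / sin x ≤ 1 / x + 1 :=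
    one_div_sin_le_one_div_add_one hx0 (by linarith [pi_lt_four])
  have hpole : 0 < 1 / (π - x) := by positivity
  have hpole_le : 1 / (π - x) ≤ 1 := by
    rw [div_le_one (by linarith)]
    linarith [pi_gt_three]
  rw [abs_le]
  constructor <;> linarith

end Real

lemma sum_Icc_inv_sub_eq_harmonic (s : ℕ) :
    ∑ k ∈ Icc 1 (s - 1), ((s : ℝ) - k)⁻¹ = harmonic (s - 1) := by
  rw [harmonic_eq_sum_Icc]
  push_cast
  refine sum_nbij' (s - ·) (s - ·) ?_ ?_ ?_ ?_ ?_ <;> intro k hk <;>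
    simp only [mem_Icc] at hk ⊢
  all_goals first | omega | rw [Nat.cast_sub (by omega)]

lemma sum_one_div_poles_eq (s : ℕ) :
    ∑ k ∈ Icc 1 (s - 1), (1 / (k * π / s) + 1 / (π - k * π / s)) =
      2 * s / π * harmonic (s - 1) := by
  have hterm : ∀ k ∈ Icc 1 (s - 1), 1 / (k * π / s) + 1 / (π - k * π / s) =
      s / π * ((k : ℝ)⁻¹ + ((s : ℝ) - k)⁻¹) := by
    intro k hk
    have hk := mem_Icc.1 hk
    have hs : (s : ℝ) ≠ 0 := by norm_cast; omega
    have hk0 : (k : ℝ) ≠ 0 := by norm_cast; omega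
    have hsk : (s : ℝ) - k ≠ 0 := sub_ne_zero.2 (by norm_cast; omega)
    field_simp
  rw [sum_congr rfl hterm, ← mul_sum, sum_add_distrib, sum_Icc_inv_sub_eq_harmonic,
    harmonic_eq_sum_Icc]
  push_cast
  ring

lemma abs_sum_one_div_sin_sub_le (s : ℕ) :
    |∑ k ∈ Icc 1 (s - 1), 1 / sin (k * π / s) - 2 * s / π * harmonic (s - 1)| ≤ s := by
  have hterm : ∀ k ∈ Icc 1 (s - 1),
      |1 / sin (k * π / s) - (1 / (k * π / s) + 1 / (π - k * π / s))| ≤ 1 := by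
    intro k hk
    have hk := mem_Icc.1 hk
    have hks : (k : ℝ) < s := by norm_cast; omega
    have hs : (0 : ℝ) < s := by norm_cast; omega
    have hk0 : (0 : ℝ) < k := by norm_cast; omega
    apply abs_one_div_sin_sub_le
    · positivity
    · rw [div_lt_iff₀ hs, mul_comm π]
      exact mul_lt_mul_of_pos_right hks pi_pos
  calc _ = |∑ k ∈ Icc 1 (s - 1),
          (1 / sin (k * π / s) - (1 / (k * π / s) + 1 / (π - k * π / s)))| := by
        rw [sum_sub_distrib, sum_one_div_poles_eq]
    _ ≤ ∑ k ∈ Icc 1 (s - 1), 1 := (abs_sum_le_sum_abs _ _).trans (sum_le_sum hterm)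
    _ ≤ s := by simp

lemma tendsto_log_natCast_atTop : Tendsto (fun n : ℕ ↦ log n) atTop atTop :=
  tendsto_log_atTop.comp tendsto_natCast_atTop_atTop

lemma tendsto_harmonic_pred_div_log :
    Tendsto (fun s : ℕ ↦ (harmonic (s - 1) : ℝ) / log s) atTop (𝓝 1) := by
  have hγ : Tendsto (fun s : ℕ ↦ (harmonic (s - 1) : ℝ) - log s) atTop
      (𝓝 eulerMascheroniConstant) := by
    refine (tendsto_harmonic_sub_log_add_one.comp (tendsto_sub_atTop_nat 1)).congr' ?_
    filter_upwards [eventually_ge_atTop 1] with s hs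
    simp [Nat.cast_sub hs]
  have := (hγ.div_atTop tendsto_log_natCast_atTop).add_const 1
  rw [zero_add] at this
  refine this.congr' ?_
  filter_upwards [eventually_gt_atTop 1] with s hs
  have : log s ≠ 0 := (log_pos (by exact_mod_cast hs)).ne'
  field_simp
  ring

lemma tendsto_one_div_mul_log_mul_of_abs_le {E : ℕ → ℝ} (hE : ∀ s, |E s| ≤ s) :
    Tendsto (fun s : ℕ ↦ 1 / (s * log s) * E s) atTop (𝓝 0) := by
  refine squeeze_zero_norm' ?_ tendsto_log_natCast_atTop.inv_tendsto_atTop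
  filter_upwards [eventually_gt_atTop 1] with s hs
  have hs0 : (0 : ℝ) < s := by positivity
  have hlog_pos : 0 < log s := log_pos (by exact_mod_cast hs)
  rw [Pi.inv_apply, norm_mul, Real.norm_of_nonneg (by positivity), Real.norm_eq_abs,
    one_div, mul_inv, mul_comm _ (log _)⁻¹, mul_assoc]
  refine mul_le_of_le_one_right (by positivity) ?_
  rw [inv_mul_le_one₀ hs0]
  exact hE s

/-- lim_{s→∞} (1/(s log s)) Σ_{k=1}^{s−1} 1/sin(kπ/s) = 2/π. -/
theorem sum_inv_sin_asymptotics :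
    Filter.Tendsto
      (fun s : ℕ =>
        (1 / ((s : ℝ) * Real.log s)) * ∑ k ∈ Finset.Icc 1 (s-1), 1 / Real.sin (k * π / s))
      Filter.atTop (nhds (2/π)) := by
  have hmain := (tendsto_harmonic_pred_div_log.const_mul (2 / π)).add
    (tendsto_one_div_mul_log_mul_of_abs_le abs_sum_one_div_sin_sub_le)
  rw [mul_one, add_zero] at hmain
  refine hmain.congr' ?_
  filter_upwards [eventually_gt_atTop 1] with s hs
  have hs0 : (s : ℝ) ≠ 0 := by positivity
  have hlog : log s ≠ 0 := (log_pos (by exact_mod_cast hs)).ne'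
  field_simp
  ring
end
end

section
/- Let f : ℝ³ → [0,∞) be measurable and suppose there are constants C₀ > 0 and δ > 0 with f(x) ≤ C₀ e^{−δ|x|} for all x. Then there exists a constant C > 0 such that for every ξ ∈ ℝ³ with |ξ| ≥ 1, | ∫_{ℝ³}∫_{ℝ³} f(x) f(y) / |x − y + ξ| dx dy − (∫_{ℝ³} f)² / |ξ| | ≤ C / |ξ|². -/
noncomputable section

open MeasureTheory Real Filter

/-!
For `‖ξ‖ ≥ 1` the kernel difference `|‖w + ξ‖⁻¹ - ‖ξ‖⁻¹|` is at most `2‖w‖ / ‖ξ‖²` when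
`‖w‖ ≤ ‖ξ‖ / 2`, and at most `1 + ‖w + ξ‖⁻¹ ≤ 4‖w‖² (1 + ‖w + ξ‖⁻¹) / ‖ξ‖²` otherwise.
With `w = x - y` and `(1 + ‖x - y‖)² ≤ (1 + ‖x‖)² (1 + ‖y‖)²`, the polynomial weights are
absorbed by the exponential decay of `f`, and what remains is the potential `∫ g y / ‖y - c‖`
of a bounded integrable `g`, which is bounded uniformly in `c` because `‖z‖⁻¹` is integrable
near `0` in dimension at least two.
-/

open Metric Set

lemma one_add_sq_le_mul_exp {c t : ℝ} (hc : 0 < c) (ht : 0 ≤ t) :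
    (1 + t) ^ 2 ≤ max 1 (2 / c) ^ 2 * exp (c * t) := by
  have hlin : 1 + t ≤ max 1 (2 / c) * (1 + c * t / 2) := by
    have h1 : (1 : ℝ) ≤ max 1 (2 / c) := le_max_left _ _
    have h2 : 2 / c ≤ max 1 (2 / c) := le_max_right _ _
    have : t = 2 / c * (c * t / 2) := by field_simp
    nlinarith [mul_nonneg hc.le ht]
  calc (1 + t) ^ 2 ≤ (max 1 (2 / c) * exp (c * t / 2)) ^ 2 := by
        gcongr
        exact hlin.trans (by gcongr; linarith [add_one_le_exp (c * t / 2)])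
    _ = max 1 (2 / c) ^ 2 * exp (c * t) := by
        rw [mul_pow, ← exp_nat_mul]; ring_nf

section Kernel

variable {F : Type*} [SeminormedAddCommGroup F]

lemma abs_inv_norm_add_sub_inv_norm_le (w ξ : F) (hξ : 1 ≤ ‖ξ‖) :
    |‖w + ξ‖⁻¹ - ‖ξ‖⁻¹| ≤ 4 * (1 + ‖w‖) ^ 2 * (2 + ‖w + ξ‖⁻¹) / ‖ξ‖ ^ 2 := by
  have hb : 0 < ‖ξ‖ := one_pos.trans_le hξ
  have hw := norm_nonneg w
  have ha := inv_nonneg.2 (norm_nonneg (w + ξ))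
  rw [le_div_iff₀ (by positivity)]
  rcases le_or_gt (2 * ‖w‖) ‖ξ‖ with hnear | hfar
  · have hwξ : ‖ξ‖ ≤ ‖w + ξ‖ + ‖w‖ := by
      simpa using norm_sub_le (w + ξ) w
    have hdiff : |‖ξ‖ - ‖w + ξ‖| ≤ ‖w‖ := by
      simpa using abs_norm_sub_norm_le ξ (w + ξ)
    have ha0 : 0 < ‖w + ξ‖ := by linarith
    calc |‖w + ξ‖⁻¹ - ‖ξ‖⁻¹| * ‖ξ‖ ^ 2
        = |‖ξ‖ - ‖w + ξ‖| * ‖ξ‖ / ‖w + ξ‖ := by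
          rw [inv_sub_inv ha0.ne' hb.ne', abs_div, abs_of_pos (mul_pos ha0 hb)]
          field_simp
      _ ≤ ‖w‖ * (2 * ‖w + ξ‖) / ‖w + ξ‖ := by gcongr; linarith
      _ = 2 * ‖w‖ := by field_simp
      _ ≤ 4 * (1 + ‖w‖) ^ 2 * (2 + ‖w + ξ‖⁻¹) := by nlinarith
  · have hinv : |‖w + ξ‖⁻¹ - ‖ξ‖⁻¹| ≤ 2 + ‖w + ξ‖⁻¹ := by
      have := inv_le_one_of_one_le₀ hξ
      rw [abs_le]; constructor <;> linarith [inv_nonneg.2 hb.le]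
    have hsq : ‖ξ‖ ^ 2 ≤ 4 * (1 + ‖w‖) ^ 2 := by nlinarith
    calc |‖w + ξ‖⁻¹ - ‖ξ‖⁻¹| * ‖ξ‖ ^ 2 ≤ (2 + ‖w + ξ‖⁻¹) * (4 * (1 + ‖w‖) ^ 2) := by
          gcongr
      _ = _ := by ring

lemma mul_abs_inv_norm_sub_add_sub_le {a b : ℝ} (x y ξ : F) (ha : 0 ≤ a)
    (hab : a * (1 + ‖y‖) ^ 2 ≤ b) (hξ : 1 ≤ ‖ξ‖) :
    a * |‖x - y + ξ‖⁻¹ - ‖ξ‖⁻¹| ≤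
      4 * (1 + ‖x‖) ^ 2 / ‖ξ‖ ^ 2 * (b * (2 + ‖x - y + ξ‖⁻¹)) := by
  have hxy : (1 + ‖x - y‖) ^ 2 ≤ (1 + ‖x‖) ^ 2 * (1 + ‖y‖) ^ 2 := by
    rw [← mul_pow]
    gcongr
    nlinarith [norm_sub_le x y, norm_nonneg x, norm_nonneg y]
  calc a * |‖x - y + ξ‖⁻¹ - ‖ξ‖⁻¹|
      ≤ a * (4 * (1 + ‖x - y‖) ^ 2 * (2 + ‖x - y + ξ‖⁻¹) / ‖ξ‖ ^ 2) := by
        gcongr; exact abs_inv_norm_add_sub_inv_norm_le (x - y) ξ hξ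
    _ ≤ a * (4 * ((1 + ‖x‖) ^ 2 * (1 + ‖y‖) ^ 2) * (2 + ‖x - y + ξ‖⁻¹) / ‖ξ‖ ^ 2) := by
        gcongr
    _ = 4 * (1 + ‖x‖) ^ 2 / ‖ξ‖ ^ 2 * (a * (1 + ‖y‖) ^ 2 * (2 + ‖x - y + ξ‖⁻¹)) := by ring
    _ ≤ 4 * (1 + ‖x‖) ^ 2 / ‖ξ‖ ^ 2 * (b * (2 + ‖x - y + ξ‖⁻¹)) := by gcongr

lemma div_norm_sub_le_indicator_add {g : F → ℝ} {B : ℝ} (hg0 : ∀ y, 0 ≤ g y)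
    (hgB : ∀ y, g y ≤ B) (c y : F) :
    g y / ‖y - c‖ ≤ B * (ball 0 1).indicator (fun z => ‖z‖⁻¹) (y - c) + g y := by
  by_cases hy : y - c ∈ ball (0 : F) 1
  · rw [indicator_of_mem hy, div_eq_mul_inv, mul_comm B]
    have := mul_le_mul_of_nonneg_left (hgB y) (inv_nonneg.2 (norm_nonneg (y - c)))
    linarith [hg0 y, mul_comm (g y) ‖y - c‖⁻¹]
  · rw [indicator_of_notMem hy, mul_zero, zero_add]
    exact div_le_self (hg0 y) (by simpa using hy)

end Kernel

section Potential

variable {E : Type*} [NormedAddCommGroup E] [NormedSpace ℝ E] [FiniteDimensional ℝ E]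
  [MeasurableSpace E] [BorelSpace E] [Nontrivial E] {μ : Measure E} [μ.IsAddHaarMeasure]
  {f g : E → ℝ} {B : ℝ}

variable (μ) in
lemma integrable_exp_neg_mul_norm {c : ℝ} (hc : 0 < c) :
    Integrable (fun x : E => exp (-c * ‖x‖)) μ := by
  rw [integrable_fun_norm_addHaar μ (f := fun y => exp (-c * y))]
  refine (integrableOn_rpow_mul_exp_neg_mul_rpow (s := (Module.finrank ℝ E - 1 : ℕ))
    (neg_one_lt_zero.trans_le (Nat.cast_nonneg _)) one_pos hc).congr_fun
    (fun y _ => ?_) measurableSet_Ioi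
  simp [rpow_natCast]

lemma integrableOn_inv_norm_ball (hE : 2 ≤ Module.finrank ℝ E) :
    IntegrableOn (fun x : E => ‖x‖⁻¹) (ball 0 1) μ := by
  rw [integrableOn_fun_norm_addHaar μ (f := fun y => y⁻¹)]
  refine ((continuous_pow (Module.finrank ℝ E - 2)).integrableOn_Icc.mono_set
    Ioo_subset_Icc_self).congr_fun (fun y hy => ?_) measurableSet_Ioo
  obtain ⟨k, hk⟩ := Nat.exists_eq_add_of_le hE
  have hy0 : y ≠ 0 := hy.1.ne'
  simp only [hk, smul_eq_mul]
  rw [show 2 + k - 1 = k + 1 by omega, show 2 + k - 2 = k by omega, pow_succ]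
  field_simp

lemma integrable_indicator_ball_inv_norm_sub (hE : 2 ≤ Module.finrank ℝ E) (c : E) :
    Integrable (fun y => (ball 0 1).indicator (fun z : E => ‖z‖⁻¹) (y - c)) μ :=
  ((integrable_indicator_iff measurableSet_ball).2 (integrableOn_inv_norm_ball hE)).comp_sub_right c

lemma integrable_div_norm_sub (hE : 2 ≤ Module.finrank ℝ E) (hg : Integrable g μ)
    (hg0 : ∀ y, 0 ≤ g y) (hgB : ∀ y, g y ≤ B) (c : E) :
    Integrable (fun y => g y / ‖y - c‖) μ := by
  refine (((integrable_indicator_ball_inv_norm_sub hE c).const_mul B).add hg).mono'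
    (by simp_rw [div_eq_mul_inv]
        exact hg.1.mul (by fun_prop : Measurable fun y : E => ‖y - c‖⁻¹).aestronglyMeasurable)
    (.of_forall fun y => ?_)
  rw [Real.norm_of_nonneg (div_nonneg (hg0 y) (norm_nonneg _))]
  exact div_norm_sub_le_indicator_add hg0 hgB c y

lemma integral_div_norm_sub_le (hE : 2 ≤ Module.finrank ℝ E) (hg : Integrable g μ)
    (hg0 : ∀ y, 0 ≤ g y) (hgB : ∀ y, g y ≤ B) (c : E) :
    ∫ y, g y / ‖y - c‖ ∂μ ≤ B * ∫ z in ball 0 1, ‖z‖⁻¹ ∂μ + ∫ y, g y ∂μ := by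
  have hind := integrable_indicator_ball_inv_norm_sub (μ := μ) hE c
  refine (integral_mono (integrable_div_norm_sub hE hg hg0 hgB c) ((hind.const_mul B).add hg)
    (div_norm_sub_le_indicator_add hg0 hgB c)).trans_eq ?_
  rw [Pi.add_def, integral_add (hind.const_mul B) hg, integral_const_mul,
    integral_sub_right_eq_self (fun y => (ball 0 1).indicator (fun z : E => ‖z‖⁻¹) y),
    integral_indicator measurableSet_ball]

lemma abs_integral_div_norm_sub_add_sub_le (hE : 2 ≤ Module.finrank ℝ E)
    (hfint : Integrable f μ) (hf0 : ∀ y, 0 ≤ f y) (hfB : ∀ y, f y ≤ B)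
    (hg : Integrable g μ) (hg0 : ∀ y, 0 ≤ g y) (hgB : ∀ y, g y ≤ B)
    (hfg : ∀ y, f y * (1 + ‖y‖) ^ 2 ≤ g y) {ξ : E} (hξ : 1 ≤ ‖ξ‖) (x : E) :
    |∫ y, f y / ‖x - y + ξ‖ ∂μ - (∫ y, f y ∂μ) / ‖ξ‖| ≤
      4 * (1 + ‖x‖) ^ 2 * (3 * ∫ y, g y ∂μ + B * ∫ z in ball 0 1, ‖z‖⁻¹ ∂μ) / ‖ξ‖ ^ 2 := by
  have hnorm : ∀ y, ‖x - y + ξ‖ = ‖y - (x + ξ)‖ := fun y => by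
    rw [sub_add_eq_add_sub, norm_sub_rev]
  have hfpot := integrable_div_norm_sub hE hfint hf0 hfB (x + ξ)
  have hgpot := integrable_div_norm_sub hE hg hg0 hgB (x + ξ)
  have hgweight : ∫ y, g y * (2 + ‖x - y + ξ‖⁻¹) ∂μ =
      2 * ∫ y, g y ∂μ + ∫ y, g y / ‖y - (x + ξ)‖ ∂μ := by
    rw [← integral_const_mul, ← integral_add (hg.const_mul 2) hgpot]
    simp_rw [hnorm]
    ring_nf
  have hdom : Integrable
      (fun y => 4 * (1 + ‖x‖) ^ 2 / ‖ξ‖ ^ 2 * (g y * (2 + ‖x - y + ξ‖⁻¹))) μ := by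
    refine (((hg.mul_const 2).add hgpot).const_mul (4 * (1 + ‖x‖) ^ 2 / ‖ξ‖ ^ 2)).congr
      (.of_forall fun y => ?_)
    simp only [Pi.add_apply, hnorm]
    ring
  have hdiff : ∫ y, f y / ‖x - y + ξ‖ ∂μ - (∫ y, f y ∂μ) / ‖ξ‖ =
      ∫ y, (f y / ‖x - y + ξ‖ - f y / ‖ξ‖) ∂μ := by
    simp_rw [hnorm]
    rw [integral_sub hfpot (hfint.div_const _), integral_div]
  rw [hdiff, ← Real.norm_eq_abs]
  refine (norm_integral_le_of_norm_le hdom (.of_forall fun y => ?_)).trans ?_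
  · rw [Real.norm_eq_abs, div_eq_mul_inv, div_eq_mul_inv, ← mul_sub, abs_mul,
      abs_of_nonneg (hf0 y)]
    exact mul_abs_inv_norm_sub_add_sub_le x y ξ (hf0 y) (hfg y) hξ
  · have hpot := integral_div_norm_sub_le hE hg hg0 hgB (x + ξ)
    rw [integral_const_mul, hgweight, mul_div_right_comm (4 * (1 + ‖x‖) ^ 2)]
    exact mul_le_mul_of_nonneg_left (by linarith) (by positivity)

lemma abs_integral_integral_div_norm_sub_add_sub_le (hE : 2 ≤ Module.finrank ℝ E)
    (hf : Measurable f) (hf0 : ∀ y, 0 ≤ f y) (hg : Integrable g μ) (hgB : ∀ y, g y ≤ B)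
    (hfg : ∀ y, f y * (1 + ‖y‖) ^ 2 ≤ g y) {ξ : E} (hξ : 1 ≤ ‖ξ‖) :
    |(∫ x, ∫ y, f x * f y / ‖x - y + ξ‖ ∂μ ∂μ) - (∫ x, f x ∂μ) ^ 2 / ‖ξ‖| ≤
      4 * (∫ y, g y ∂μ) * (3 * ∫ y, g y ∂μ + B * ∫ z in ball 0 1, ‖z‖⁻¹ ∂μ) / ‖ξ‖ ^ 2 := by
  have hg0 : ∀ y, 0 ≤ g y := fun y => (mul_nonneg (hf0 y) (sq_nonneg _)).trans (hfg y)
  have hfg' : ∀ y, f y ≤ g y := fun y =>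
    (le_mul_of_one_le_right (hf0 y) (one_le_pow₀ (by linarith [norm_nonneg y]))).trans (hfg y)
  have hfB : ∀ y, f y ≤ B := fun y => (hfg' y).trans (hgB y)
  have hfint : Integrable f μ := hg.mono' hf.aestronglyMeasurable
    (.of_forall fun y => by rw [Real.norm_of_nonneg (hf0 y)]; exact hfg' y)
  set W := ∫ z in ball (0 : E) 1, ‖z‖⁻¹ ∂μ
  have hS : 0 ≤ 3 * ∫ y, g y ∂μ + B * W := by
    have : 0 ≤ ∫ y, g y ∂μ := integral_nonneg hg0
    have := (hg0 0).trans (hgB 0)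
    have : 0 ≤ W := setIntegral_nonneg measurableSet_ball fun z _ => inv_nonneg.2 (norm_nonneg z)
    positivity
  have hinner : ∀ x, ∫ y, f x * f y / ‖x - y + ξ‖ ∂μ = f x * ∫ y, f y / ‖x - y + ξ‖ ∂μ :=
    fun x => by simp_rw [mul_div_assoc]; exact integral_const_mul _ _
  have hVmeas : AEStronglyMeasurable (fun x => ∫ y, f y / ‖x - y + ξ‖ ∂μ) μ :=
    (StronglyMeasurable.integral_prod_right (f := fun x y => f y / ‖x - y + ξ‖)
      ((hf.comp measurable_snd).div (by fun_prop)).stronglyMeasurable).aestronglyMeasurable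
  have hVbdd : ∀ x, ‖∫ y, f y / ‖x - y + ξ‖ ∂μ‖ ≤ B * W + ∫ y, f y ∂μ := fun x => by
    rw [Real.norm_of_nonneg (integral_nonneg fun y => div_nonneg (hf0 y) (norm_nonneg _))]
    simp_rw [sub_add_eq_add_sub x _ ξ, norm_sub_rev (x + ξ)]
    exact integral_div_norm_sub_le hE hfint hf0 hfB (x + ξ)
  have hdiff : (∫ x, f x * ∫ y, f y / ‖x - y + ξ‖ ∂μ ∂μ) - (∫ x, f x ∂μ) ^ 2 / ‖ξ‖ =
      ∫ x, f x * ((∫ y, f y / ‖x - y + ξ‖ ∂μ) - (∫ y, f y ∂μ) / ‖ξ‖) ∂μ := by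
    simp_rw [mul_sub]
    rw [integral_sub (hfint.mul_bdd hVmeas (.of_forall hVbdd)) (hfint.mul_const _),
      integral_mul_const, sq, mul_div_assoc]
  simp_rw [hinner]
  rw [hdiff, ← Real.norm_eq_abs]
  refine (norm_integral_le_of_norm_le (hg.mul_const (4 * (3 * ∫ y, g y ∂μ + B * W) / ‖ξ‖ ^ 2))
    (.of_forall fun x => ?_)).trans_eq ?_
  · rw [norm_mul, Real.norm_of_nonneg (hf0 x), Real.norm_eq_abs]
    calc f x * |(∫ y, f y / ‖x - y + ξ‖ ∂μ) - (∫ y, f y ∂μ) / ‖ξ‖|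
        ≤ f x * (4 * (1 + ‖x‖) ^ 2 * (3 * ∫ y, g y ∂μ + B * W) / ‖ξ‖ ^ 2) := by
          gcongr
          · exact hf0 x
          · exact abs_integral_div_norm_sub_add_sub_le hE hfint hf0 hfB hg hg0 hgB hfg hξ x
      _ = f x * (1 + ‖x‖) ^ 2 * (4 * (3 * ∫ y, g y ∂μ + B * W) / ‖ξ‖ ^ 2) := by ring
      _ ≤ g x * (4 * (3 * ∫ y, g y ∂μ + B * W) / ‖ξ‖ ^ 2) := by gcongr; exact hfg x
  · rw [integral_mul_const]
    ring

end Potential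

theorem coulomb_interaction_expansion_general
    (f : R3 → ℝ) (hmeas : Measurable f) (hnonneg : ∀ x, 0 ≤ f x)
    (C₀ δ : ℝ) (hδ : 0 < δ)
    (hdecay : ∀ x : R3, f x ≤ C₀ * Real.exp (-δ * ‖x‖)) :
    ∃ C > (0:ℝ), ∀ ξ : R3, 1 ≤ ‖ξ‖ →
      |(∫ x : R3, ∫ y : R3, f x * f y / ‖x - y + ξ‖)
        - (∫ x : R3, f x)^2 / ‖ξ‖|
      ≤ C / ‖ξ‖^2 := by
  have hδ2 : 0 < δ / 2 := half_pos hδ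
  have hC₀ : 0 ≤ C₀ := by simpa using (hnonneg 0).trans (hdecay 0)
  set K := max 1 (2 / (δ / 2)) ^ 2
  set g : R3 → ℝ := fun x => C₀ * K * exp (-(δ / 2) * ‖x‖)
  have hfg : ∀ x, f x * (1 + ‖x‖) ^ 2 ≤ g x := fun x =>
    calc f x * (1 + ‖x‖) ^ 2 ≤ C₀ * exp (-δ * ‖x‖) * (K * exp (δ / 2 * ‖x‖)) :=
          mul_le_mul (hdecay x) (one_add_sq_le_mul_exp hδ2 (norm_nonneg x)) (sq_nonneg _)
            ((hnonneg x).trans (hdecay x))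
      _ = C₀ * K * exp (-(δ / 2) * ‖x‖) := by rw [mul_mul_mul_comm, ← exp_add]; ring_nf
  have hgB : ∀ x, g x ≤ C₀ * K := fun x =>
    mul_le_of_le_one_right (by positivity)
      (exp_le_one_iff.2 (by nlinarith [norm_nonneg x]))
  have hg : Integrable g := (integrable_exp_neg_mul_norm volume hδ2).const_mul _
  refine ⟨max 1 _, lt_max_of_lt_left one_pos, fun ξ hξ =>
    (abs_integral_integral_div_norm_sub_add_sub_le (by simp) hmeas hnonneg hg hgB hfg hξ).trans
      (div_le_div_of_nonneg_right (le_max_right _ _) (sq_nonneg _))⟩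

/-- expansion of the shifted Coulomb interaction of an
exponentially decaying density. -/
theorem coulomb_interaction_expansion
    (f : R3 → ℝ) (hmeas : Measurable f) (hnonneg : ∀ x, 0 ≤ f x)
    (C₀ δ : ℝ) (hC₀ : 0 < C₀) (hδ : 0 < δ)
    (hdecay : ∀ x : R3, f x ≤ C₀ * Real.exp (-δ * ‖x‖)) :
    ∃ C > (0:ℝ), ∀ ξ : R3, 1 ≤ ‖ξ‖ →
      |(∫ x : R3, ∫ y : R3, f x * f y / ‖x - y + ξ‖)
        - (∫ x : R3, f x)^2 / ‖ξ‖|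
      ≤ C / ‖ξ‖^2 :=
  coulomb_interaction_expansion_general f hmeas hnonneg C₀ δ hδ hdecay
end
end

section
/- Let s ≥ 2 be an integer, r > 0, and ξ_i = (r cos(2(i−1)π/s), r sin(2(i−1)π/s), 0) for i = 1, …, s. For j ∈ {1,…,s} let Ω_j be the set of points x = (x₁, x₂, x₃) ∈ ℝ³ such that (x₁,x₂) ≠ (0,0) and the angle between the planar vector (x₁,x₂) and the planar part (ξ_j)' = (r cos(2(j−1)π/s), r sin(2(j−1)π/s)) of ξ_j is at most π/s, i.e. ⟨(x₁,x₂)/|(x₁,x₂)|, (ξ_j)'/|(ξ_j)'|⟩ ≥ cos(π/s). Then for all i, j ∈ {1,…,s} and all x ∈ Ω_j, |x − ξ_i| ≥ (1/2)|ξ_j − ξ_i|. -/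
noncomputable section

open MeasureTheory Real Filter

/-!
Let `p = (x₁, x₂, 0)` be the projection of `x` to the plane of the spikes, so that
`‖p - ξ_i‖ ≤ ‖x - ξ_i‖`. Two distinct spikes subtend an angle `φ ≥ 2π/s` at the origin, while `p`
makes an angle at most `π/s` with `ξ_j`; by the triangle inequality for angles, `p` makes an angle
`θ ≥ φ/2` with `ξ_i`. Now `‖ξ_j - ξ_i‖ = 2r sin(φ/2)`, whereas the distance from `ξ_i` to the
ray through `p` is `r sin θ` if `θ ≤ π/2` and at least `r` otherwise.
-/

open InnerProductGeometry

theorem Real.cos_le_cos_of_le_of_le_two_pi_sub {a t : ℝ} (ha : 0 ≤ a) (hat : a ≤ t)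
    (ht : t ≤ 2 * π - a) : Real.cos t ≤ Real.cos a := by
  rcases le_total t π with htπ | hπt
  · exact Real.cos_le_cos_of_nonneg_of_le_pi ha htπ hat
  · rw [← Real.cos_two_pi_sub t]
    exact Real.cos_le_cos_of_nonneg_of_le_pi ha (by linarith) (by linarith)

theorem Real.cos_two_pi_mul_div_le_cos_two_pi_div {m s : ℝ} (hm : 1 ≤ m) (hms : m ≤ s - 1) :
    Real.cos (2 * π * m / s) ≤ Real.cos (2 * π / s) := by
  have hs : 0 < s := by linarith
  apply Real.cos_le_cos_of_le_of_le_two_pi_sub (by positivity)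
  · exact div_le_div_of_nonneg_right (by nlinarith [Real.pi_pos]) hs.le
  · rw [div_le_iff₀ hs, sub_mul, div_mul_cancel₀ _ hs.ne']
    nlinarith [Real.pi_pos]

section AngleBounds

variable {V : Type*} [NormedAddCommGroup V] [InnerProductSpace ℝ V]

theorem angle_le_of_cos_le_cos_angle {x y : V} {a : ℝ} (ha : 0 ≤ a)
    (h : Real.cos a ≤ Real.cos (angle x y)) : angle x y ≤ a := by
  by_contra! hlt
  exact (Real.cos_lt_cos_of_nonneg_of_le_pi ha (angle_le_pi x y) hlt).not_ge h

theorem le_angle_of_cos_angle_le_cos {x y : V} {a : ℝ} (ha : a ≤ π)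
    (h : Real.cos (angle x y) ≤ Real.cos a) : a ≤ angle x y := by
  by_contra! hlt
  exact (Real.cos_lt_cos_of_nonneg_of_le_pi (angle_nonneg x y) ha hlt).not_ge h

theorem norm_sub_sq_eq_of_norm_eq {x y : V} (h : ‖x‖ = ‖y‖) :
    ‖x - y‖ ^ 2 = 2 * ‖y‖ ^ 2 * (1 - Real.cos (angle x y)) := by
  rw [norm_sub_sq_real, ← cos_angle_mul_norm_mul_norm, h]
  ring

/-- The left-hand side is the squared distance from `y` to the line `ℝ ∙ p`. -/
theorem sq_norm_mul_one_sub_cos_sq_angle_le (p y : V) :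
    ‖y‖ ^ 2 * (1 - Real.cos (angle p y) ^ 2) ≤ ‖p - y‖ ^ 2 := by
  rw [norm_sub_sq_real, ← cos_angle_mul_norm_mul_norm]
  nlinarith [sq_nonneg (‖p‖ - ‖y‖ * Real.cos (angle p y))]

theorem sq_norm_le_norm_sub_sq_of_cos_angle_nonpos {p y : V} (h : Real.cos (angle p y) ≤ 0) :
    ‖y‖ ^ 2 ≤ ‖p - y‖ ^ 2 := by
  rw [norm_sub_sq_real, ← cos_angle_mul_norm_mul_norm]
  nlinarith [mul_nonneg (norm_nonneg p) (norm_nonneg y)]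

theorem norm_sub_le_two_mul_norm_sub_of_two_mul_angle_le {p η ξ : V} (hη : ‖η‖ = ‖ξ‖)
    (h : 2 * angle p η ≤ angle η ξ) : ‖η - ξ‖ ≤ 2 * ‖p - ξ‖ := by
  set φ := angle η ξ
  set θ := angle p ξ
  have hθ : φ / 2 ≤ θ := by
    have := angle_le_angle_add_angle η p ξ
    rw [angle_comm η p] at this
    linarith
  have hφ : 1 - Real.cos φ = 2 * (1 - Real.cos (φ / 2) ^ 2) := by
    rw [Real.cos_sq (φ / 2), mul_div_cancel₀ φ two_ne_zero]
    ring
  have hsin_sq_le : 1 - Real.cos (φ / 2) ^ 2 ≤ 1 := by nlinarith [sq_nonneg (Real.cos (φ / 2))]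
  suffices ‖η - ξ‖ ^ 2 ≤ (2 * ‖p - ξ‖) ^ 2 from
    (pow_le_pow_iff_left₀ (norm_nonneg _) (by positivity) two_ne_zero).mp this
  rw [norm_sub_sq_eq_of_norm_eq hη, hφ]
  rcases le_total (Real.cos θ) 0 with hobtuse | hacute
  · nlinarith [sq_norm_le_norm_sub_sq_of_cos_angle_nonpos hobtuse, sq_nonneg ‖ξ‖]
  · have hle : Real.cos θ ≤ Real.cos (φ / 2) :=
      Real.cos_le_cos_of_nonneg_of_le_pi (div_nonneg (angle_nonneg η ξ) zero_le_two)
        (angle_le_pi p ξ) hθ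
    have hsq : Real.cos θ ^ 2 ≤ Real.cos (φ / 2) ^ 2 := pow_le_pow_left₀ hacute hle 2
    nlinarith [sq_norm_mul_one_sub_cos_sq_angle_le p ξ, sq_nonneg ‖ξ‖]

end AngleBounds

theorem pt_eta (x : R3) : pt (x 0) (x 1) (x 2) = x := by
  ext k; fin_cases k <;> rfl

theorem pt_sub_pt (a b c a' b' c' : ℝ) :
    pt a b c - pt a' b' c' = pt (a - a') (b - b') (c - c') := by
  ext k; fin_cases k <;> rfl

theorem inner_pt_pt (a b c a' b' c' : ℝ) :
    inner ℝ (pt a b c) (pt a' b' c') = a * a' + b * b' + c * c' := by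
  simp only [pt, WithLp.equiv_symm_apply, PiLp.inner_apply, RCLike.inner_apply, ringHom_apply,
    Fin.sum_univ_three, Fin.isValue, Matrix.cons_val_zero, Matrix.cons_val_one, Matrix.cons_val]
  ring

theorem norm_pt (a b c : ℝ) : ‖pt a b c‖ = √(a ^ 2 + b ^ 2 + c ^ 2) := by
  simp [EuclideanSpace.norm_eq, Fin.sum_univ_three, pt]

theorem norm_xiP (s : ℕ) {r : ℝ} (hr : 0 ≤ r) (i : ℕ) : ‖xiP s r i‖ = r := by
  rw [xiP, norm_pt]
  convert Real.sqrt_sq hr using 2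
  linear_combination r ^ 2 * Real.sin_sq_add_cos_sq (2 * π * i / s)

theorem inner_xiP_xiP (s : ℕ) (r : ℝ) (i j : ℕ) :
    inner ℝ (xiP s r j) (xiP s r i) = r ^ 2 * Real.cos (2 * π * j / s - 2 * π * i / s) := by
  rw [xiP, xiP, inner_pt_pt, Real.cos_sub]
  ring

theorem cos_angle_pt_xiP (s : ℕ) {r : ℝ} (hr : 0 < r) (a b : ℝ) (j : ℕ) :
    Real.cos (angle (pt a b 0) (xiP s r j)) =
      (a * Real.cos (2 * π * j / s) + b * Real.sin (2 * π * j / s)) / √(a ^ 2 + b ^ 2) := by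
  rw [cos_angle, norm_xiP s hr.le, xiP, inner_pt_pt, norm_pt]
  simp only [mul_zero, add_zero, ne_eq, OfNat.ofNat_ne_zero, not_false_eq_true, zero_pow]
  field_simp

theorem two_pi_div_le_angle_xiP_of_lt (s : ℕ) {r : ℝ} (hr : 0 < r) {i j : ℕ} (hij : i < j)
    (hj : j < s) : 2 * π / s ≤ angle (xiP s r j) (xiP s r i) := by
  have hs : (2 : ℝ) ≤ s := by exact_mod_cast (by omega : 2 ≤ s)
  apply le_angle_of_cos_angle_le_cos (by rw [div_le_iff₀ (by positivity)]; nlinarith [Real.pi_pos])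
  rw [cos_angle, inner_xiP_xiP, norm_xiP s hr.le, norm_xiP s hr.le,
    show 2 * π * j / s - 2 * π * i / s = 2 * π * (j - i : ℝ) / s by ring]
  field_simp
  apply Real.cos_two_pi_mul_div_le_cos_two_pi_div
  · rw [le_sub_iff_add_le']
    exact_mod_cast hij
  · have : (j : ℝ) + 1 ≤ s := by exact_mod_cast hj
    linarith [(Nat.cast_nonneg i : (0 : ℝ) ≤ i)]

theorem two_pi_div_le_angle_xiP (s : ℕ) {r : ℝ} (hr : 0 < r) {i j : ℕ} (hi : i < s)
    (hj : j < s) (hij : i ≠ j) : 2 * π / s ≤ angle (xiP s r j) (xiP s r i) := by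
  rcases hij.lt_or_gt with hlt | hgt
  · exact two_pi_div_le_angle_xiP_of_lt s hr hlt hj
  · rw [angle_comm]
    exact two_pi_div_le_angle_xiP_of_lt s hr hgt hi

theorem norm_pt_sub_xiP_le (x : R3) (s : ℕ) (r : ℝ) (i : ℕ) :
    ‖pt (x 0) (x 1) 0 - xiP s r i‖ ≤ ‖x - xiP s r i‖ := by
  conv_rhs => rw [← pt_eta x]
  rw [xiP, pt_sub_pt, pt_sub_pt, norm_pt, norm_pt]
  apply Real.sqrt_le_sqrt
  nlinarith [sq_nonneg (x 2)]

theorem sector_distance_bound_general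
    (s : ℕ) (r : ℝ) (hr : 0 < r)
    (i j : ℕ) (hi : i ∈ Finset.range s) (hj : j ∈ Finset.range s)
    (x : R3)
    (hang : Real.cos (π / s) ≤
      (x 0 * Real.cos (2 * π * j / s) + x 1 * Real.sin (2 * π * j / s))
        / Real.sqrt ((x 0)^2 + (x 1)^2)) :
    (1/2) * ‖xiP s r j - xiP s r i‖ ≤ ‖x - xiP s r i‖ := by
  rcases eq_or_ne i j with rfl | hij
  · simp
  set p := pt (x 0) (x 1) 0
  have hsector : angle p (xiP s r j) ≤ π / s :=
    angle_le_of_cos_le_cos_angle (by positivity) (cos_angle_pt_xiP s hr _ _ j ▸ hang)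
  have hspread : 2 * π / s ≤ angle (xiP s r j) (xiP s r i) :=
    two_pi_div_le_angle_xiP s hr (Finset.mem_range.mp hi) (Finset.mem_range.mp hj) hij
  have hcone : 2 * angle p (xiP s r j) ≤ angle (xiP s r j) (xiP s r i) := by
    rw [mul_div_assoc] at hspread
    linarith
  have hnorm : ‖xiP s r j‖ = ‖xiP s r i‖ := (norm_xiP s hr.le j).trans (norm_xiP s hr.le i).symm
  linarith [norm_sub_le_two_mul_norm_sub_of_two_mul_angle_le hnorm hcone,
    norm_pt_sub_xiP_le x s r i]

/-- for x in the sector Ω_j around ξ_j, |x − ξ_i| ≥ (1/2)|ξ_j − ξ_i|.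
(Here ξ_i of the paper is `xiP s r (i-1)`, so indices range over 0,…,s−1.) -/
theorem sector_distance_bound
    (s : ℕ) (hs : 2 ≤ s) (r : ℝ) (hr : 0 < r)
    (i j : ℕ) (hi : i ∈ Finset.range s) (hj : j ∈ Finset.range s)
    (x : R3) (hx : ¬(x 0 = 0 ∧ x 1 = 0))
    (hang : Real.cos (π / s) ≤
      (x 0 * Real.cos (2 * π * j / s) + x 1 * Real.sin (2 * π * j / s))
        / Real.sqrt ((x 0)^2 + (x 1)^2)) :
    (1/2) * ‖xiP s r j - xiP s r i‖ ≤ ‖x - xiP s r i‖ :=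
  sector_distance_bound_general s r hr i j hi hj x hang
end
end

section
/- For every δ ∈ (0,1) there exists a constant C > 0 such that for every integer s ≥ 2 and every r > 0 with 2(1−δ) r sin(π/s) ≥ 1, Σ_{i=2}^{s} exp(−(1−δ) |ξ₁ − ξ_i|) ≤ C exp(−(1−δ) · 2 r sin(π/s)), where ξ_i = (r cos(2(i−1)π/s), r sin(2(i−1)π/s), 0); equivalently, since |ξ₁ − ξ_i| = 2r sin((i−1)π/s), the sum Σ_{k=1}^{s−1} exp(−(1−δ)·2r sin(kπ/s)) is at most C exp(−(1−δ)·2r sin(π/s)). -/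
noncomputable section

open MeasureTheory Real Filter

/-! Write `t = 2(1 - δ) r sin(π/s) ≥ 1`. Since `|ξ₁ - ξ_{k+1}| = 2r sin(πk/s)` and
`k ↦ s - k` leaves this unchanged, it suffices to bound the terms with `2k ≤ s`. For those,
`q = sin(πk/s) / sin(π/s) ≥ max(1, 2k/π)` by monotonicity of `sin` on `[0, π/2]` and
Jordan's inequality, so the exponent `tq` is at least `t + q - 1 ≥ t + 2k/π - 1`, as
`(t - 1)(q - 1) ≥ 0`. Each term is therefore at most `e · e^{-t} · ρ^k` with `ρ = e^{-2/π}`,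
and a geometric series bounds the sum by `2e ρ / (1 - ρ) · e^{-t}`. -/

open Finset

lemma norm_xiP_zero_sub (s : ℕ) (r : ℝ) (i : ℕ) :
    ‖xiP s r 0 - xiP s r i‖ = 2 * |r| * |sin (π * i / s)| := by
  set x := π * i / s
  have hcos : cos (2 * π * i / s) = 1 - 2 * sin x ^ 2 := by
    rw [show 2 * π * i / s = 2 * x by ring, cos_two_mul, cos_sq']; ring
  have hsin : sin (2 * π * i / s) = 2 * sin x * cos x := by
    rw [show 2 * π * i / s = 2 * x by ring, sin_two_mul]
  rw [EuclideanSpace.norm_eq, Fin.sum_univ_three, ← abs_two, ← abs_mul, ← abs_mul,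
    ← sqrt_sq_eq_abs]
  congr 1
  simp [xiP, pt, hcos, hsin, mul_pow, sq_abs]
  linear_combination (4 * r ^ 2 * sin x ^ 2) * sin_sq_add_cos_sq x

lemma sin_pi_mul_sub_div (s i : ℕ) (hi : i ≤ s) :
    sin (π * ↑(s - i) / s) = sin (π * i / s) := by
  rcases Nat.eq_zero_or_pos s with rfl | hs
  · simp
  rw [Nat.cast_sub hi, mul_sub, sub_div, mul_div_cancel_right₀ _ (by positivity), sin_pi_sub]

lemma add_sub_one_le_mul_of_le {a b u c : ℝ} (ha : 0 < a) (hab : a ≤ b) (hu : 1 ≤ u * a)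
    (hc : c * a ≤ b) : u * a + c - 1 ≤ u * b := by
  nlinarith [mul_nonneg (sub_nonneg.2 hu) (sub_nonneg.2 hab)]

lemma exp_neg_mul_sin_le {u : ℝ} {k s : ℕ} (hk : 1 ≤ k) (hks : 2 * k ≤ s)
    (hu : 1 ≤ u * sin (π / s)) :
    exp (-(u * sin (π * k / s))) ≤ exp 1 * exp (-(u * sin (π / s))) * exp (-(2 / π)) ^ k := by
  have hs : (1 : ℝ) < s := by norm_cast; omega
  have hk' : (1 : ℝ) ≤ k := by exact_mod_cast hk
  have hks' : (2 : ℝ) * k ≤ s := by exact_mod_cast hks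
  have hkπ : π * k / s ≤ π / 2 := by
    rw [div_le_div_iff₀ (by linarith) two_pos]; nlinarith [pi_pos]
  have h1π : π / s ≤ π * k / s := by gcongr; exact le_mul_of_one_le_right pi_pos.le hk'
  have hπs : 0 < π / s := div_pos pi_pos (by linarith)
  have ha : 0 < sin (π / s) := sin_pos_of_pos_of_lt_pi hπs (div_lt_self pi_pos hs)
  have hab : sin (π / s) ≤ sin (π * k / s) :=
    sin_le_sin_of_le_of_le_pi_div_two (by linarith [pi_pos]) hkπ h1π
  have hc : 2 * k / π * sin (π / s) ≤ sin (π * k / s) := calc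
    2 * k / π * sin (π / s) ≤ 2 * k / π * (π / s) := by gcongr; exact sin_le hπs.le
    _ = 2 / π * (π * k / s) := by field_simp
    _ ≤ sin (π * k / s) := mul_le_sin (by positivity) hkπ
  have := add_sub_one_le_mul_of_le ha hab hu hc
  rw [← exp_nat_mul, ← exp_add, ← exp_add, exp_le_exp]
  linarith [show (k : ℝ) * (2 / π) = 2 * k / π by ring]

lemma sum_Icc_pow_add_pow_sub_le {K : Type*} [Field K] [LinearOrder K] [IsStrictOrderedRing K]
    {ρ : K} (h0 : 0 ≤ ρ) (h1 : ρ < 1) (n : ℕ) :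
    ∑ i ∈ Icc 1 (n - 1), (ρ ^ i + ρ ^ (n - i)) ≤ 2 * ρ / (1 - ρ) := by
  rcases n with _ | n
  · simp
    positivity
  rw [Nat.add_sub_cancel, ← Ico_add_one_right_eq_Icc, sum_add_distrib,
    sum_Ico_reflect (ρ ^ ·) 1 (Nat.le_succ _), Nat.add_sub_cancel, Nat.add_sub_cancel_left]
  have := geom_sum_Ico_le_of_lt_one (m := 1) (n := n + 1) h0 h1
  rw [pow_one] at this
  rw [mul_div_assoc, two_mul]
  exact add_le_add this this

lemma exp_neg_mul_sin_le_add_pow {u : ℝ} {s i : ℕ} (hi : i ∈ Icc 1 (s - 1))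
    (hu : 1 ≤ u * sin (π / s)) :
    exp (-(u * sin (π * i / s))) ≤
      exp 1 * exp (-(u * sin (π / s))) * (exp (-(2 / π)) ^ i + exp (-(2 / π)) ^ (s - i)) := by
  obtain ⟨hi1, his⟩ := mem_Icc.1 hi
  rcases le_total (2 * i) s with hi2 | hi2
  · refine (exp_neg_mul_sin_le hi1 hi2 hu).trans ?_
    gcongr
    exact le_add_of_nonneg_right (by positivity)
  · rw [← sin_pi_mul_sub_div s i (by omega)]
    refine (exp_neg_mul_sin_le (by omega) (by omega) hu).trans ?_
    gcongr
    exact le_add_of_nonneg_left (by positivity)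

theorem sum_exp_distance_bound_general
    (δ : ℝ) :
    ∃ C > (0:ℝ), ∀ s : ℕ, 2 ≤ s → ∀ r : ℝ, 0 < r →
      1 ≤ 2 * (1 - δ) * r * Real.sin (π / s) →
      ∑ i ∈ Finset.Icc 1 (s-1), Real.exp (-(1 - δ) * ‖xiP s r 0 - xiP s r i‖)
        ≤ C * Real.exp (-(1 - δ) * (2 * r * Real.sin (π / s))) := by
  set ρ := exp (-(2 / π))
  have hρ : ρ < 1 := exp_lt_one_iff.2 (neg_neg_of_pos (by positivity))
  refine ⟨exp 1 * (2 * ρ / (1 - ρ)), by have := sub_pos.2 hρ; positivity, ?_⟩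
  intro s _ r hr hu
  set u := 2 * (1 - δ) * r
  have hexp : ∀ x, -(1 - δ) * (2 * r * x) = -(u * x) := fun x ↦ by ring
  have hterm (i) (hi : i ∈ Icc 1 (s - 1)) : exp (-(1 - δ) * ‖xiP s r 0 - xiP s r i‖)
      ≤ exp 1 * exp (-(u * sin (π / s))) * (ρ ^ i + ρ ^ (s - i)) := by
    have his : (i : ℝ) ≤ s := by exact_mod_cast (mem_Icc.1 hi).2.trans (Nat.sub_le s 1)
    have hsin : 0 ≤ sin (π * i / s) := sin_nonneg_of_nonneg_of_le_pi (by positivity)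
      (div_le_of_le_mul₀ (by positivity) pi_pos.le (by gcongr))
    rw [norm_xiP_zero_sub, abs_of_pos hr, abs_of_nonneg hsin, hexp]
    exact exp_neg_mul_sin_le_add_pow hi hu
  rw [hexp]
  calc _ ≤ ∑ i ∈ Icc 1 (s - 1), exp 1 * exp (-(u * sin (π / s))) * (ρ ^ i + ρ ^ (s - i)) :=
        sum_le_sum hterm
    _ ≤ exp 1 * exp (-(u * sin (π / s))) * (2 * ρ / (1 - ρ)) := by
        rw [← mul_sum]
        gcongr
        exact sum_Icc_pow_add_pow_sub_le (exp_pos _).le hρ s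
    _ = _ := by ring

/-- Σ_{i=2}^{s} e^{−(1−δ)|ξ₁−ξ_i|} ≤ C e^{−(1−δ)·2r sin(π/s)}.
(Here ξ_i of the paper is `xiP s r (i-1)`.) -/
theorem sum_exp_distance_bound
    (δ : ℝ) (hδ : δ ∈ Set.Ioo (0:ℝ) 1) :
    ∃ C > (0:ℝ), ∀ s : ℕ, 2 ≤ s → ∀ r : ℝ, 0 < r →
      1 ≤ 2 * (1 - δ) * r * Real.sin (π / s) →
      ∑ i ∈ Finset.Icc 1 (s-1), Real.exp (-(1 - δ) * ‖xiP s r 0 - xiP s r i‖)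
        ≤ C * Real.exp (-(1 - δ) * (2 * r * Real.sin (π / s))) :=
  sum_exp_distance_bound_general δ
end
end

section
/- Let V : (0,∞) → ℝ be measurable and bounded, and suppose there are constants a > 0, θ > 0, m ∈ (0,1), C_V > 0 and R₀ > 0 such that |V(ρ) − 1 − a ρ^{−m}| ≤ C_V ρ^{−(m+θ)} for all ρ ≥ R₀. Let U : ℝ³ → ℝ be measurable with 0 ≤ U(x) ≤ C₀ e^{−δ|x|} for some constants C₀, δ > 0, and set A₁ = ∫_{ℝ³} U². Then there exists C > 0 such that for every ξ ∈ ℝ³ with |ξ| ≥ 2R₀ + 2, | ∫_{ℝ³} (V(|x|) − 1) U(x − ξ)² dx − a A₁ / |ξ|^m | ≤ C / |ξ|^{m + θ'}, where θ' = min(θ, 1). -/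
noncomputable section

open MeasureTheory Real Filter

/-! Substituting `x = y + ξ`, the quantity to estimate is
`∫ (V(|y + ξ|) - 1 - a|ξ|^{-m}) U(y)² dy`. Where `|y| ≤ |ξ|/2`, the point `y + ξ` lies in the
asymptotic regime of `V`, and the expansion of `V` together with the mean value theorem for
`ρ ↦ ρ^{-m}` bound the bracket by a multiple of `|ξ|^{-(m+θ')} (1 + |y|)`. Where `|y| > |ξ|/2`,
boundedness of `V` and `1 ≤ 4|y|²/|ξ|²` bound it by a multiple of `|ξ|^{-2} |y|²`. Both are
`O(|ξ|^{-(m+θ')} (1 + |y|)²)`, and `(1 + |y|)² U(y)²` is integrable because `U` decays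
exponentially. -/

section ExponentialDecay

variable {E : Type*} [NormedAddCommGroup E] [NormedSpace ℝ E] [FiniteDimensional ℝ E]
  [MeasurableSpace E] [BorelSpace E] {μ : Measure E} [μ.IsAddHaarMeasure]

lemma one_add_pow_le_mul_exp {δ t : ℝ} (hδ : 0 < δ) (ht : 0 ≤ t) (n : ℕ) :
    (1 + t) ^ n ≤ n.factorial / δ ^ n * exp δ * exp (δ * t) := by
  have h := pow_div_factorial_le_exp (x := δ * (1 + t)) (by positivity) n
  rw [div_le_iff₀ (by positivity), mul_pow, mul_add, mul_one] at h
  rw [mul_assoc, ← exp_add, div_mul_eq_mul_div, le_div_iff₀ (by positivity)]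
  linarith

lemma integrable_one_add_norm_pow_mul_exp_neg_mul_norm (k : ℕ) {δ : ℝ} (hδ : 0 < δ) :
    Integrable (fun x : E ↦ (1 + ‖x‖) ^ k * exp (-δ * ‖x‖)) μ := by
  set d := Module.finrank ℝ E
  set C := (k + (d + 1)).factorial / δ ^ (k + (d + 1)) * exp δ
  refine ((integrable_one_add_norm (μ := μ) (r := d + 1) (by linarith)).const_mul C).mono'
    (by fun_prop) (Eventually.of_forall fun x ↦ ?_)
  have hx : 0 < 1 + ‖x‖ := by positivity
  rw [norm_of_nonneg (by positivity), rpow_neg hx.le, ← Nat.cast_succ, rpow_natCast,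
    ← div_eq_mul_inv, le_div_iff₀ (by positivity), mul_right_comm, ← pow_add]
  calc (1 + ‖x‖) ^ (k + (d + 1)) * exp (-δ * ‖x‖)
      ≤ C * exp (δ * ‖x‖) * exp (-δ * ‖x‖) := by
        gcongr; exact one_add_pow_le_mul_exp hδ (norm_nonneg x) _
    _ = C := by rw [mul_assoc, ← exp_add]; simp

lemma integrable_one_add_norm_pow_mul_sq_of_abs_le {U : E → ℝ} {C₀ δ : ℝ}
    (hU : AEStronglyMeasurable U μ) (hδ : 0 < δ) (hUb : ∀ x, |U x| ≤ C₀ * exp (-δ * ‖x‖))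
    (k : ℕ) : Integrable (fun x ↦ (1 + ‖x‖) ^ k * U x ^ 2) μ := by
  have h2δ : 0 < 2 * δ := by positivity
  refine ((integrable_one_add_norm_pow_mul_exp_neg_mul_norm k h2δ).const_mul (C₀ ^ 2)).mono'
    (by fun_prop) (Eventually.of_forall fun x ↦ ?_)
  have hsq : U x ^ 2 ≤ C₀ ^ 2 * exp (-(2 * δ) * ‖x‖) := by
    calc U x ^ 2 = |U x| ^ 2 := (sq_abs _).symm
      _ ≤ (C₀ * exp (-δ * ‖x‖)) ^ 2 := pow_le_pow_left₀ (abs_nonneg _) (hUb x) 2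
      _ = C₀ ^ 2 * exp (-(2 * δ) * ‖x‖) := by rw [mul_pow, ← exp_nat_mul]; ring_nf
  rw [norm_of_nonneg (by positivity), mul_left_comm]
  gcongr

end ExponentialDecay

lemma abs_rpow_neg_sub_rpow_neg_le {m c r s : ℝ} (hm : 0 ≤ m) (hc : 0 < c) (hr : c ≤ r)
    (hs : c ≤ s) : |r ^ (-m) - s ^ (-m)| ≤ m * c ^ (-(m + 1)) * |r - s| := by
  have hderiv : ∀ x ∈ Set.Ici c,
      HasDerivWithinAt (fun t : ℝ ↦ t ^ (-m)) (-m * x ^ (-m - 1)) (Set.Ici c) x :=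
    fun x hx ↦ (hasDerivAt_rpow_const (Or.inl (hc.trans_le hx).ne')).hasDerivWithinAt
  have hbound : ∀ x ∈ Set.Ici c, ‖-m * x ^ (-m - 1)‖ ≤ m * c ^ (-(m + 1)) := by
    intro x hx
    rw [norm_mul, norm_neg, norm_of_nonneg hm,
      norm_of_nonneg (rpow_nonneg (hc.le.trans hx) _), show -m - 1 = -(m + 1) by ring]
    exact mul_le_mul_of_nonneg_left (rpow_le_rpow_of_nonpos hc hx (by linarith)) hm
  simpa [abs_sub_comm] using
    (convex_Ici c).norm_image_sub_le_of_norm_hasDerivWithin_le hderiv hbound hs hr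

lemma div_two_rpow_neg {R : ℝ} (hR : 0 ≤ R) (p : ℝ) : (R / 2) ^ (-p) = 2 ^ p * R ^ (-p) := by
  rw [div_rpow hR zero_le_two, rpow_neg zero_le_two, div_inv_eq_mul, mul_comm]

section PotentialTail

variable {V : ℝ → ℝ} {a m θ C_V R₀ p R r t : ℝ}

lemma abs_potential_sub_rpow_neg_le_of_near (hm : 0 ≤ m) (hθ : 0 ≤ θ) (hCV : 0 ≤ C_V)
    (hV : ∀ ρ, R₀ ≤ ρ → |V ρ - 1 - a * ρ ^ (-m)| ≤ C_V * ρ ^ (-(m + θ)))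
    (hpθ : p ≤ m + θ) (hp1 : p ≤ m + 1) (hR : 1 ≤ R) (hR₀ : R₀ ≤ R / 2)
    (hrR : |r - R| ≤ t) (ht : t ≤ R / 2) :
    |V r - 1 - a * R ^ (-m)| ≤ (C_V * 2 ^ (m + θ) + |a| * m * 2 ^ (m + 1) * t) * R ^ (-p) := by
  have hr : R / 2 ≤ r := by linarith [neg_abs_le (r - R)]
  have hR0 : 0 < R / 2 := by linarith
  have htail : C_V * r ^ (-(m + θ)) ≤ C_V * 2 ^ (m + θ) * R ^ (-p) := by
    calc C_V * r ^ (-(m + θ)) ≤ C_V * (2 ^ (m + θ) * R ^ (-(m + θ))) := by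
          rw [← div_two_rpow_neg (by linarith : 0 ≤ R)]
          exact mul_le_mul_of_nonneg_left
            (rpow_le_rpow_of_nonpos hR0 hr (by linarith : -(m + θ) ≤ 0)) hCV
      _ ≤ C_V * 2 ^ (m + θ) * R ^ (-p) := by
          rw [← mul_assoc]; gcongr
  have hshift : |a * (r ^ (-m) - R ^ (-m))| ≤ |a| * m * 2 ^ (m + 1) * t * R ^ (-p) := by
    calc |a * (r ^ (-m) - R ^ (-m))| ≤ |a| * (m * (R / 2) ^ (-(m + 1)) * t) := by
          rw [abs_mul]
          gcongr
          exact (abs_rpow_neg_sub_rpow_neg_le hm hR0 hr (by linarith)).trans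
            (by gcongr)
      _ ≤ |a| * m * 2 ^ (m + 1) * t * R ^ (-p) := by
          rw [div_two_rpow_neg (by linarith)]
          have : R ^ (-(m + 1)) ≤ R ^ (-p) := rpow_le_rpow_of_exponent_le hR (by linarith)
          have ht0 : 0 ≤ t := (abs_nonneg _).trans hrR
          calc |a| * (m * (2 ^ (m + 1) * R ^ (-(m + 1))) * t)
              = |a| * m * 2 ^ (m + 1) * t * R ^ (-(m + 1)) := by ring
            _ ≤ _ := by gcongr
  calc |V r - 1 - a * R ^ (-m)|
      = |(V r - 1 - a * r ^ (-m)) + a * (r ^ (-m) - R ^ (-m))| := by ring_nf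
    _ ≤ C_V * r ^ (-(m + θ)) + |a * (r ^ (-m) - R ^ (-m))| :=
        (abs_add_le _ _).trans (by gcongr; exact hV r (by linarith))
    _ ≤ _ := by linarith

lemma abs_potential_sub_rpow_neg_le_of_far {Cb : ℝ} (hm : 0 ≤ m)
    (hVb : ∀ ρ, 0 ≤ ρ → |V ρ| ≤ Cb) (hp2 : p ≤ 2) (hR : 1 ≤ R) (hr : 0 ≤ r) (ht : R / 2 ≤ t) :
    |V r - 1 - a * R ^ (-m)| ≤ 4 * (Cb + 1 + |a|) * t ^ 2 * R ^ (-p) := by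
  have hRm : R ^ (-m) ≤ 1 := rpow_le_one_of_one_le_of_nonpos hR (by linarith)
  have hbdd : |V r - 1 - a * R ^ (-m)| ≤ Cb + 1 + |a| := by
    calc |V r - 1 - a * R ^ (-m)| ≤ |V r| + |1| + |a| * |R ^ (-m)| := by
          rw [← abs_mul]; exact (abs_sub _ _).trans (by gcongr; exact abs_sub _ _)
      _ ≤ Cb + 1 + |a| * 1 := by
          rw [abs_one, abs_of_nonneg (rpow_nonneg (by linarith) _)]; gcongr; exact hVb r hr
      _ = Cb + 1 + |a| := by ring
  have hone : 1 ≤ 4 * t ^ 2 * R ^ (-p) := by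
    have hR0 : 0 < R := by linarith
    calc (1 : ℝ) = 4 * (R / 2) ^ 2 * R ^ (-2 : ℝ) := by
          rw [rpow_neg hR0.le, rpow_two]; field_simp; ring
      _ ≤ 4 * t ^ 2 * R ^ (-p) := by
          gcongr
  have hCb : 0 ≤ Cb := (abs_nonneg _).trans (hVb 0 le_rfl)
  calc |V r - 1 - a * R ^ (-m)| ≤ (Cb + 1 + |a|) * 1 := by rw [mul_one]; exact hbdd
    _ ≤ (Cb + 1 + |a|) * (4 * t ^ 2 * R ^ (-p)) := by gcongr
    _ = _ := by ring

lemma exists_abs_potential_sub_rpow_neg_le {Cb : ℝ} (hm : 0 ≤ m) (hθ : 0 ≤ θ) (hCV : 0 ≤ C_V)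
    (hV : ∀ ρ, R₀ ≤ ρ → |V ρ - 1 - a * ρ ^ (-m)| ≤ C_V * ρ ^ (-(m + θ)))
    (hVb : ∀ ρ, 0 ≤ ρ → |V ρ| ≤ Cb) (hpθ : p ≤ m + θ) (hp1 : p ≤ m + 1) (hp2 : p ≤ 2) :
    ∃ K, 0 ≤ K ∧ ∀ R r t : ℝ, 1 ≤ R → R₀ ≤ R / 2 → 0 ≤ r → |r - R| ≤ t →
      |V r - 1 - a * R ^ (-m)| ≤ K * (1 + t) ^ 2 * R ^ (-p) := by
  have hCb : 0 ≤ Cb := (abs_nonneg _).trans (hVb 0 le_rfl)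
  set A := C_V * 2 ^ (m + θ)
  set B := |a| * m * 2 ^ (m + 1)
  set D := 4 * (Cb + 1 + |a|)
  have hA : 0 ≤ A := by positivity
  have hB : 0 ≤ B := by positivity
  have hD : 0 ≤ D := by positivity
  refine ⟨A + B + D, by positivity, fun R r t hR hR₀ hr hrR ↦ ?_⟩
  have ht : 0 ≤ t := (abs_nonneg _).trans hrR
  have hRp : 0 ≤ R ^ (-p) := rpow_nonneg (by linarith) _
  rcases le_or_gt t (R / 2) with hnear | hfar
  · refine (abs_potential_sub_rpow_neg_le_of_near hm hθ hCV hV hpθ hp1 hR hR₀ hrR hnear).trans ?_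
    gcongr
    nlinarith [mul_nonneg hB ht, mul_nonneg hB (sq_nonneg t), mul_nonneg hA (sq_nonneg t),
      mul_nonneg hD (sq_nonneg (1 + t))]
  · refine (abs_potential_sub_rpow_neg_le_of_far hm hVb hp2 hR hr hfar.le).trans ?_
    gcongr <;> linarith

end PotentialTail

theorem potential_perturbation_expansion_general
    (V : ℝ → ℝ) (hmeas : Measurable V) (hbdd : ∃ Cb : ℝ, ∀ ρ ∈ Set.Ioi (0:ℝ), |V ρ| ≤ Cb)
    (a θ m C_V R₀ : ℝ) (hθ : 0 < θ) (hm : m ∈ Set.Ioo (0:ℝ) 1)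
    (hCV : 0 < C_V) (hR₀ : 0 < R₀)
    (hV : ∀ ρ : ℝ, R₀ ≤ ρ → |V ρ - 1 - a * ρ ^ (-m)| ≤ C_V * ρ ^ (-(m + θ)))
    (U : R3 → ℝ) (hU : Measurable U)
    (C₀ δ : ℝ) (hδ : 0 < δ)
    (hUb : ∀ x : R3, 0 ≤ U x ∧ U x ≤ C₀ * Real.exp (-δ * ‖x‖)) :
    ∃ C > (0:ℝ), ∀ ξ : R3, 2 * R₀ + 2 ≤ ‖ξ‖ →
      |(∫ x : R3, (V ‖x‖ - 1) * (U (x - ξ))^2)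
        - a * (∫ x : R3, (U x)^2) / ‖ξ‖ ^ m|
      ≤ C / ‖ξ‖ ^ (m + min θ 1) := by
  -- `hbdd` says nothing at `ρ = 0`, which is `‖y + ξ‖` at `y = -ξ`.
  obtain ⟨Cb, hCb⟩ : ∃ Cb, ∀ ρ, 0 ≤ ρ → |V ρ| ≤ Cb := by
    obtain ⟨Cb, hCb⟩ := hbdd
    refine ⟨max Cb |V 0|, fun ρ hρ ↦ ?_⟩
    rcases hρ.eq_or_lt with rfl | hρ
    exacts [le_max_right _ _, (hCb ρ hρ).trans (le_max_left _ _)]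
  set p := m + min θ 1
  obtain ⟨K, hK0, hK⟩ := exists_abs_potential_sub_rpow_neg_le (p := p) hm.1.le hθ.le hCV.le hV hCb
    (by simp [p]) (by simp [p]) (by linarith [hm.2, min_le_right θ 1])
  have hUabs : ∀ x, |U x| ≤ C₀ * exp (-δ * ‖x‖) := fun x ↦ by
    rw [abs_of_nonneg (hUb x).1]; exact (hUb x).2
  have hW : Integrable fun y : R3 ↦ (1 + ‖y‖) ^ 2 * U y ^ 2 :=
    integrable_one_add_norm_pow_mul_sq_of_abs_le hU.aestronglyMeasurable hδ hUabs 2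
  have hU2 : Integrable fun y : R3 ↦ U y ^ 2 := by
    simpa using integrable_one_add_norm_pow_mul_sq_of_abs_le hU.aestronglyMeasurable hδ hUabs 0
  refine ⟨K * (∫ y, (1 + ‖y‖) ^ 2 * U y ^ 2) + 1, by positivity, fun ξ hξ ↦ ?_⟩
  have hR : 1 ≤ ‖ξ‖ := by linarith
  have hpt : ∀ y : R3, ‖(V ‖y + ξ‖ - 1) * U y ^ 2 - a * ‖ξ‖ ^ (-m) * U y ^ 2‖
      ≤ ‖ξ‖ ^ (-p) * (K * ((1 + ‖y‖) ^ 2 * U y ^ 2)) := fun y ↦ by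
    rw [← sub_mul, norm_mul, norm_of_nonneg (sq_nonneg _), Real.norm_eq_abs]
    calc |V ‖y + ξ‖ - 1 - a * ‖ξ‖ ^ (-m)| * U y ^ 2
        ≤ K * (1 + ‖y‖) ^ 2 * ‖ξ‖ ^ (-p) * U y ^ 2 := by
          gcongr
          exact hK _ _ _ hR (by linarith) (norm_nonneg _)
            (by simpa using abs_norm_sub_norm_le (y + ξ) ξ)
      _ = _ := by ring
  have hF : Integrable fun y : R3 ↦ (V ‖y + ξ‖ - 1) * U y ^ 2 :=
    hU2.bdd_mul (c := Cb + 1) ((hmeas.comp (by fun_prop)).sub_const 1).aestronglyMeasurable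
      (Eventually.of_forall fun y ↦ (norm_sub_le _ _).trans (by
        rw [norm_one, Real.norm_eq_abs]; linarith [hCb _ (norm_nonneg (y + ξ))]))
  have hshift : ∫ x : R3, (V ‖x‖ - 1) * U (x - ξ) ^ 2 = ∫ y : R3, (V ‖y + ξ‖ - 1) * U y ^ 2 := by
    rw [← integral_add_right_eq_self _ ξ]; simp
  have hconst : a * (∫ x : R3, U x ^ 2) / ‖ξ‖ ^ m = ∫ y : R3, a * ‖ξ‖ ^ (-m) * U y ^ 2 := by
    rw [integral_const_mul, rpow_neg (norm_nonneg _)]; ring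
  rw [hshift, hconst, ← integral_sub hF (hU2.const_mul _), ← Real.norm_eq_abs]
  calc _ ≤ ∫ y : R3, ‖ξ‖ ^ (-p) * (K * ((1 + ‖y‖) ^ 2 * U y ^ 2)) :=
        norm_integral_le_of_norm_le ((hW.const_mul K).const_mul _) (Eventually.of_forall hpt)
    _ = K * (∫ y, (1 + ‖y‖) ^ 2 * U y ^ 2) / ‖ξ‖ ^ p := by
        rw [integral_const_mul, integral_const_mul, rpow_neg (norm_nonneg _)]; ring
    _ ≤ _ := by gcongr; linarith

/-- ∫ (V(|x|)−1) U(x−ξ)² dx = aA₁/|ξ|^m + O(|ξ|^{−(m+θ')}). -/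
theorem potential_perturbation_expansion
    (V : ℝ → ℝ) (hmeas : Measurable V) (hbdd : ∃ Cb : ℝ, ∀ ρ ∈ Set.Ioi (0:ℝ), |V ρ| ≤ Cb)
    (a θ m C_V R₀ : ℝ) (ha : 0 < a) (hθ : 0 < θ) (hm : m ∈ Set.Ioo (0:ℝ) 1)
    (hCV : 0 < C_V) (hR₀ : 0 < R₀)
    (hV : ∀ ρ : ℝ, R₀ ≤ ρ → |V ρ - 1 - a * ρ ^ (-m)| ≤ C_V * ρ ^ (-(m + θ)))
    (U : R3 → ℝ) (hU : Measurable U)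
    (C₀ δ : ℝ) (hC₀ : 0 < C₀) (hδ : 0 < δ)
    (hUb : ∀ x : R3, 0 ≤ U x ∧ U x ≤ C₀ * Real.exp (-δ * ‖x‖)) :
    ∃ C > (0:ℝ), ∀ ξ : R3, 2 * R₀ + 2 ≤ ‖ξ‖ →
      |(∫ x : R3, (V ‖x‖ - 1) * (U (x - ξ))^2)
        - a * (∫ x : R3, (U x)^2) / ‖ξ‖ ^ m|
      ≤ C / ‖ξ‖ ^ (m + min θ 1) :=
  potential_perturbation_expansion_general V hmeas hbdd a θ m C_V R₀ hθ hm hCV hR₀ hV U hU C₀ δ hδ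
    hUb
end
end

section
/- Let V : (0,∞) → ℝ be measurable and bounded, and suppose there are constants a > 0, θ > 0, m ∈ (0,1), C_V > 0 and R₀ > 0 such that |V(ρ) − 1 − a ρ^{−m}| ≤ C_V ρ^{−(m+θ)} for all ρ ≥ R₀. Let U : ℝ³ → ℝ be measurable with 0 ≤ U(x) ≤ C₀ e^{−δ|x|} for some constants C₀, δ > 0. Then there exists C > 0 such that for every ξ ∈ ℝ³ with |ξ| ≥ max(1, 2R₀), ∫_{ℝ³} (V(|x|) − 1)² U(x − ξ)² dx ≤ C / |ξ|^{2m}; consequently, for every w ∈ L²(ℝ³), | ∫_{ℝ³} (V(|x|) − 1) U(x − ξ) w(x) dx | ≤ C^{1/2} |ξ|^{−m} (∫_{ℝ³} w²)^{1/2}. -/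
noncomputable section

open MeasureTheory Real Filter

/-! Split `ℝ³` at the sphere `‖x‖ = ‖ξ‖ / 2`. Outside it, the asymptotics of `V` give
`|V(‖x‖) - 1| ≲ ‖ξ‖^(-m)`. Inside it, `V - 1` is merely bounded, but `‖x - ξ‖ ≥ ‖ξ‖ / 2`, so one
of the two factors `e^(-δ‖x - ξ‖)` in `U(x - ξ)²` is at most `e^(-δ‖ξ‖/2) ≲ ‖ξ‖^(-2) ≤ ‖ξ‖^(-2m)`.
Either way the integrand is at most `K ‖ξ‖^(-2m) e^(-δ‖x - ξ‖)`, which is integrable; the bound on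
the pairing with `w` is then Cauchy–Schwarz. -/

theorem Real.exp_neg_le_factorial_div_pow {x : ℝ} (hx : 0 < x) (n : ℕ) :
    exp (-x) ≤ n.factorial / x ^ n := by
  rw [exp_neg, le_div_iff₀ (pow_pos hx n), inv_mul_le_iff₀ (exp_pos x),
    ← div_le_iff₀ (by positivity)]
  exact pow_div_factorial_le_exp _ hx.le n

theorem Real.exp_neg_mul_le_rpow_neg {c r p : ℝ} (hc : 0 < c) (hr : 1 ≤ r) (hp : p ≤ 2) :
    exp (-c * r) ≤ 2 / c ^ 2 * r ^ (-p) := by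
  have hr0 : 0 < r := one_pos.trans_le hr
  calc exp (-c * r) = exp (-(c * r)) := by rw [neg_mul]
    _ ≤ (Nat.factorial 2 : ℝ) / (c * r) ^ 2 := exp_neg_le_factorial_div_pow (by positivity) 2
    _ = 2 / c ^ 2 * r ^ (-(2 : ℝ)) := by
        rw [rpow_neg hr0.le, rpow_two, Nat.factorial_two, mul_pow]; push_cast; ring
    _ ≤ 2 / c ^ 2 * r ^ (-p) := by
        gcongr

theorem integrable_exp_neg_mul_norm_s18 {E : Type*} [NormedAddCommGroup E] [NormedSpace ℝ E]
    [FiniteDimensional ℝ E] [MeasurableSpace E] [BorelSpace E] (μ : Measure E)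
    [μ.IsAddHaarMeasure] {δ : ℝ} (hδ : 0 < δ) :
    Integrable (fun x : E => exp (-δ * ‖x‖)) μ := by
  set n := Module.finrank ℝ E + 1
  have hn : (Module.finrank ℝ E : ℝ) < (n : ℝ) := by push_cast [n]; linarith
  refine ((integrable_one_add_norm hn).const_mul (exp δ * n.factorial / δ ^ n)).mono'
    (by fun_prop) (Eventually.of_forall fun x => ?_)
  have h1 : 0 < 1 + ‖x‖ := by positivity
  rw [norm_of_nonneg (exp_pos _).le, rpow_neg h1.le, rpow_natCast]
  calc exp (-δ * ‖x‖) = exp δ * exp (-(δ * (1 + ‖x‖))) := by rw [← exp_add]; ring_nf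
    _ ≤ exp δ * (n.factorial / (δ * (1 + ‖x‖)) ^ n) :=
        mul_le_mul_of_nonneg_left (exp_neg_le_factorial_div_pow (by positivity) n) (exp_pos _).le
    _ = exp δ * n.factorial / δ ^ n * ((1 + ‖x‖) ^ n)⁻¹ := by rw [mul_pow]; field_simp

theorem abs_integral_mul_le_sqrt_mul_sqrt {α : Type*} [MeasurableSpace α] {μ : Measure α}
    {f g : α → ℝ} (hf : MemLp f 2 μ) (hg : MemLp g 2 μ) :
    |∫ x, f x * g x ∂μ| ≤ √(∫ x, f x ^ 2 ∂μ) * √(∫ x, g x ^ 2 ∂μ) := by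
  have h2 : ENNReal.ofReal 2 = 2 := by norm_num
  have hsq : ∀ y : ℝ, ‖y‖ ^ (2 : ℝ) = y ^ 2 := fun y => by rw [rpow_two, norm_eq_abs, sq_abs]
  calc |∫ x, f x * g x ∂μ| ≤ ∫ x, ‖f x‖ * ‖g x‖ ∂μ := by
        simpa only [norm_mul, norm_eq_abs] using norm_integral_le_integral_norm (fun x => f x * g x)
    _ ≤ (∫ x, ‖f x‖ ^ (2 : ℝ) ∂μ) ^ (1 / (2 : ℝ)) * (∫ x, ‖g x‖ ^ (2 : ℝ) ∂μ) ^ (1 / (2 : ℝ)) :=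
        integral_mul_norm_le_Lp_mul_Lq HolderConjugate.two_two (h2 ▸ hf) (h2 ▸ hg)
    _ = √(∫ x, f x ^ 2 ∂μ) * √(∫ x, g x ^ 2 ∂μ) := by simp only [hsq, sqrt_eq_rpow, one_div]

theorem abs_sub_le_mul_rpow_neg_of_asymptotic {V : ℝ → ℝ} {V₀ a θ m C_V R₀ : ℝ} (ha : 0 ≤ a)
    (hθ : 0 ≤ θ) (hCV : 0 ≤ C_V)
    (hV : ∀ ρ : ℝ, R₀ ≤ ρ → |V ρ - V₀ - a * ρ ^ (-m)| ≤ C_V * ρ ^ (-(m + θ)))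
    {ρ : ℝ} (hρR : R₀ ≤ ρ) (hρ : 1 / 2 ≤ ρ) :
    |V ρ - V₀| ≤ (a + 2 ^ θ * C_V) * ρ ^ (-m) := by
  have hρ0 : 0 < ρ := by linarith
  have htail : ρ ^ (-(m + θ)) ≤ 2 ^ θ * ρ ^ (-m) := by
    have hθ' : ρ ^ (-θ) ≤ (1 / 2) ^ (-θ) := rpow_le_rpow_of_nonpos (by norm_num) hρ (by linarith)
    rw [one_div, inv_rpow zero_le_two, ← rpow_neg zero_le_two, neg_neg] at hθ'
    rw [neg_add, rpow_add hρ0, mul_comm]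
    exact mul_le_mul_of_nonneg_right hθ' (rpow_nonneg hρ0.le _)
  have hrem := abs_le.mp ((hV ρ hρR).trans (mul_le_mul_of_nonneg_left htail hCV))
  have hmain : 0 ≤ a * ρ ^ (-m) := mul_nonneg ha (rpow_nonneg hρ0.le _)
  rw [abs_le]
  constructor <;> linarith [hrem.1, hrem.2]

section Pointwise

variable {E : Type*} [NormedAddCommGroup E] {V : ℝ → ℝ} {a θ m C_V R₀ Cb δ : ℝ}

theorem sq_sub_one_le_of_half_norm_le (ha : 0 ≤ a) (hθ : 0 ≤ θ) (hm : 0 ≤ m) (hCV : 0 ≤ C_V)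
    (hV : ∀ ρ : ℝ, R₀ ≤ ρ → |V ρ - 1 - a * ρ ^ (-m)| ≤ C_V * ρ ^ (-(m + θ)))
    {r ρ : ℝ} (hr : max 1 (2 * R₀) ≤ r) (hρ : r / 2 ≤ ρ) :
    (V ρ - 1) ^ 2 ≤ (2 ^ m * (a + 2 ^ θ * C_V)) ^ 2 * r ^ (-(2 * m)) := by
  have hr0 : 0 < r := one_pos.trans_le (le_of_max_le_left hr)
  have hdecay : ρ ^ (-m) ≤ 2 ^ m * r ^ (-m) := by
    calc ρ ^ (-m) ≤ (r / 2) ^ (-m) := rpow_le_rpow_of_nonpos (by positivity) hρ (by linarith)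
      _ = 2 ^ m * r ^ (-m) := by
          rw [div_eq_mul_inv, mul_rpow hr0.le (by norm_num), inv_rpow zero_le_two,
            ← rpow_neg zero_le_two, neg_neg, mul_comm]
  have habs := abs_sub_le_mul_rpow_neg_of_asymptotic ha hθ hCV hV
    (ρ := ρ) (by linarith [le_of_max_le_right hr]) (by linarith [le_of_max_le_left hr])
  calc (V ρ - 1) ^ 2 = |V ρ - 1| ^ 2 := (sq_abs _).symm
    _ ≤ ((a + 2 ^ θ * C_V) * (2 ^ m * r ^ (-m))) ^ 2 := by
        gcongr
        exact habs.trans (mul_le_mul_of_nonneg_left hdecay (by positivity))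
    _ = (2 ^ m * (a + 2 ^ θ * C_V)) ^ 2 * r ^ (-(2 * m)) := by
        rw [show -(2 * m) = -m * (2 : ℕ) by push_cast; ring, rpow_mul_natCast hr0.le]; ring

theorem sq_sub_one_mul_exp_le (ha : 0 ≤ a) (hθ : 0 ≤ θ) (hm : m ∈ Set.Ioo (0 : ℝ) 1)
    (hCV : 0 ≤ C_V) (hV : ∀ ρ : ℝ, R₀ ≤ ρ → |V ρ - 1 - a * ρ ^ (-m)| ≤ C_V * ρ ^ (-(m + θ)))
    (hCb : ∀ ρ ∈ Set.Ioi (0 : ℝ), |V ρ| ≤ Cb) (hδ : 0 < δ)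
    {ξ x : E} (hξ : max 1 (2 * R₀) ≤ ‖ξ‖) (hx : x ≠ 0) :
    (V ‖x‖ - 1) ^ 2 * exp (-δ * ‖x - ξ‖) ≤
      ((2 ^ m * (a + 2 ^ θ * C_V)) ^ 2 + 8 * (Cb + 1) ^ 2 / δ ^ 2) * ‖ξ‖ ^ (-(2 * m)) := by
  have hexp_le_one : exp (-δ * ‖x - ξ‖) ≤ 1 :=
    exp_le_one_iff.mpr (mul_nonpos_of_nonpos_of_nonneg (by linarith) (norm_nonneg _))
  have hpow : 0 ≤ ‖ξ‖ ^ (-(2 * m)) := rpow_nonneg (norm_nonneg _) _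
  rcases le_or_gt (‖ξ‖ / 2) ‖x‖ with hfar | hnear
  · have hV1 := sq_sub_one_le_of_half_norm_le ha hθ hm.1.le hCV hV hξ hfar
    calc (V ‖x‖ - 1) ^ 2 * exp (-δ * ‖x - ξ‖) ≤ (V ‖x‖ - 1) ^ 2 :=
          mul_le_of_le_one_right (sq_nonneg _) hexp_le_one
      _ ≤ _ := hV1.trans (by gcongr; exact le_add_of_nonneg_right (by positivity))
  · have hbdd : (V ‖x‖ - 1) ^ 2 ≤ (Cb + 1) ^ 2 := by
      have hVx := abs_le.mp (hCb ‖x‖ (norm_pos_iff.mpr hx))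
      exact sq_le_sq' (by linarith) (by linarith)
    have hdist : ‖ξ‖ / 2 ≤ ‖x - ξ‖ := by
      linarith [norm_sub_norm_le ξ x, norm_sub_rev ξ x]
    have hexp : exp (-δ * ‖x - ξ‖) ≤ 8 / δ ^ 2 * ‖ξ‖ ^ (-(2 * m)) :=
      calc exp (-δ * ‖x - ξ‖) ≤ exp (-(δ / 2) * ‖ξ‖) :=
            exp_le_exp.mpr (by nlinarith)
        _ ≤ 2 / (δ / 2) ^ 2 * ‖ξ‖ ^ (-(2 * m)) :=
            exp_neg_mul_le_rpow_neg (by positivity) (le_of_max_le_left hξ) (by linarith [hm.2])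
        _ = 8 / δ ^ 2 * ‖ξ‖ ^ (-(2 * m)) := by ring
    calc (V ‖x‖ - 1) ^ 2 * exp (-δ * ‖x - ξ‖) ≤ (Cb + 1) ^ 2 * (8 / δ ^ 2 * ‖ξ‖ ^ (-(2 * m))) :=
          mul_le_mul hbdd hexp (exp_pos _).le (sq_nonneg _)
      _ ≤ _ := by
          rw [← mul_assoc]
          refine mul_le_mul_of_nonneg_right ?_ hpow
          rw [mul_div_assoc', mul_comm]
          exact le_add_of_nonneg_left (sq_nonneg _)

end Pointwise

section Integral

variable {E : Type*} [NormedAddCommGroup E] [NormedSpace ℝ E] [FiniteDimensional ℝ E]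
  [MeasurableSpace E] [BorelSpace E] [Nontrivial E] (μ : Measure E) [μ.IsAddHaarMeasure]

theorem exists_integral_sq_sub_one_mul_sq_shift_le {V : ℝ → ℝ} (hmeas : Measurable V)
    (hbdd : ∃ Cb : ℝ, ∀ ρ ∈ Set.Ioi (0 : ℝ), |V ρ| ≤ Cb) {a θ m C_V R₀ : ℝ} (ha : 0 < a)
    (hθ : 0 ≤ θ) (hm : m ∈ Set.Ioo (0 : ℝ) 1) (hCV : 0 ≤ C_V)
    (hV : ∀ ρ : ℝ, R₀ ≤ ρ → |V ρ - 1 - a * ρ ^ (-m)| ≤ C_V * ρ ^ (-(m + θ)))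
    {U : E → ℝ} (hU : Measurable U) {C₀ δ : ℝ} (hC₀ : 0 < C₀) (hδ : 0 < δ)
    (hUb : ∀ x : E, 0 ≤ U x ∧ U x ≤ C₀ * exp (-δ * ‖x‖)) :
    ∃ C > (0 : ℝ), ∀ ξ : E, max 1 (2 * R₀) ≤ ‖ξ‖ →
      Integrable (fun x => (V ‖x‖ - 1) ^ 2 * U (x - ξ) ^ 2) μ ∧
      ∫ x, (V ‖x‖ - 1) ^ 2 * U (x - ξ) ^ 2 ∂μ ≤ C / ‖ξ‖ ^ (2 * m) := by
  obtain ⟨Cb, hCb⟩ := hbdd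
  set L := (2 ^ m * (a + 2 ^ θ * C_V)) ^ 2 + 8 * (Cb + 1) ^ 2 / δ ^ 2
  set I := ∫ y, exp (-δ * ‖y‖) ∂μ
  have hexp_int := integrable_exp_neg_mul_norm_s18 μ hδ
  have hI : 0 < I := by
    refine (integral_pos_iff_support_of_nonneg (fun _ => (exp_pos _).le) hexp_int).mpr ?_
    simp [Function.support, (exp_pos _).ne']
  refine ⟨C₀ ^ 2 * L * I, by positivity, fun ξ hξ => ?_⟩
  have hbound : ∀ᵐ x ∂μ, (V ‖x‖ - 1) ^ 2 * U (x - ξ) ^ 2 ≤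
      C₀ ^ 2 * L * ‖ξ‖ ^ (-(2 * m)) * exp (-δ * ‖x - ξ‖) := by
    filter_upwards [measure_singleton (μ := μ) 0 |> compl_mem_ae_iff.mpr] with x hx
    have hU2 : U (x - ξ) ^ 2 ≤ C₀ ^ 2 * (exp (-δ * ‖x - ξ‖) * exp (-δ * ‖x - ξ‖)) := by
      rw [← sq, ← mul_pow]
      exact pow_le_pow_left₀ (hUb _).1 (hUb _).2 2
    have hVe := sq_sub_one_mul_exp_le ha.le hθ hm hCV hV hCb hδ hξ hx
    calc (V ‖x‖ - 1) ^ 2 * U (x - ξ) ^ 2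
        ≤ (V ‖x‖ - 1) ^ 2 * (C₀ ^ 2 * (exp (-δ * ‖x - ξ‖) * exp (-δ * ‖x - ξ‖))) := by gcongr
      _ = C₀ ^ 2 * ((V ‖x‖ - 1) ^ 2 * exp (-δ * ‖x - ξ‖)) * exp (-δ * ‖x - ξ‖) := by ring
      _ ≤ C₀ ^ 2 * (L * ‖ξ‖ ^ (-(2 * m))) * exp (-δ * ‖x - ξ‖) := by gcongr
      _ = C₀ ^ 2 * L * ‖ξ‖ ^ (-(2 * m)) * exp (-δ * ‖x - ξ‖) := by ring
  have hdom : Integrable (fun x => C₀ ^ 2 * L * ‖ξ‖ ^ (-(2 * m)) * exp (-δ * ‖x - ξ‖)) μ :=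
    (hexp_int.comp_sub_right ξ).const_mul _
  have hnonneg : 0 ≤ᵐ[μ] fun x => (V ‖x‖ - 1) ^ 2 * U (x - ξ) ^ 2 :=
    Eventually.of_forall fun x => by positivity
  refine ⟨hdom.mono' (by fun_prop) ?_, ?_⟩
  · filter_upwards [hbound] with x hx
    rwa [norm_of_nonneg (by positivity)]
  calc ∫ x, (V ‖x‖ - 1) ^ 2 * U (x - ξ) ^ 2 ∂μ
      ≤ ∫ x, C₀ ^ 2 * L * ‖ξ‖ ^ (-(2 * m)) * exp (-δ * ‖x - ξ‖) ∂μ :=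
        integral_mono_of_nonneg hnonneg hdom hbound
    _ = C₀ ^ 2 * L * I / ‖ξ‖ ^ (2 * m) := by
        rw [integral_const_mul, integral_sub_right_eq_self (fun y => exp (-δ * ‖y‖)) ξ,
          rpow_neg (norm_nonneg _)]
        ring

end Integral

theorem potential_perturbation_L2_bound_general
    (V : ℝ → ℝ) (hmeas : Measurable V) (hbdd : ∃ Cb : ℝ, ∀ ρ ∈ Set.Ioi (0:ℝ), |V ρ| ≤ Cb)
    (a θ m C_V R₀ : ℝ) (ha : 0 < a) (hθ : 0 < θ) (hm : m ∈ Set.Ioo (0:ℝ) 1)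
    (hCV : 0 < C_V)
    (hV : ∀ ρ : ℝ, R₀ ≤ ρ → |V ρ - 1 - a * ρ ^ (-m)| ≤ C_V * ρ ^ (-(m + θ)))
    (U : R3 → ℝ) (hU : Measurable U)
    (C₀ δ : ℝ) (hC₀ : 0 < C₀) (hδ : 0 < δ)
    (hUb : ∀ x : R3, 0 ≤ U x ∧ U x ≤ C₀ * Real.exp (-δ * ‖x‖)) :
    ∃ C > (0:ℝ), ∀ ξ : R3, max 1 (2 * R₀) ≤ ‖ξ‖ →
      (∫ x : R3, (V ‖x‖ - 1)^2 * (U (x - ξ))^2) ≤ C / ‖ξ‖ ^ (2 * m) ∧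
      ∀ w : R3 → ℝ, MeasureTheory.MemLp w 2 MeasureTheory.volume →
        |∫ x : R3, (V ‖x‖ - 1) * U (x - ξ) * w x|
          ≤ Real.sqrt C * ‖ξ‖ ^ (-m) * Real.sqrt (∫ x : R3, (w x)^2) := by
  obtain ⟨C, hC, hL2⟩ := exists_integral_sq_sub_one_mul_sq_shift_le volume hmeas hbdd ha hθ.le hm
    hCV.le hV hU hC₀ hδ hUb
  refine ⟨C, hC, fun ξ hξ => ⟨(hL2 ξ hξ).2, fun w hw => ?_⟩⟩
  obtain ⟨hint, hle⟩ := hL2 ξ hξ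
  have hξ0 : 0 < ‖ξ‖ := one_pos.trans_le (le_of_max_le_left hξ)
  have hF : MemLp (fun x => (V ‖x‖ - 1) * U (x - ξ)) 2 volume :=
    (memLp_two_iff_integrable_sq (by fun_prop)).mpr (by simpa only [mul_pow] using hint)
  calc |∫ x : R3, (V ‖x‖ - 1) * U (x - ξ) * w x|
      ≤ √(∫ x : R3, ((V ‖x‖ - 1) * U (x - ξ)) ^ 2) * √(∫ x : R3, w x ^ 2) :=
        abs_integral_mul_le_sqrt_mul_sqrt hF hw
    _ ≤ √(C / ‖ξ‖ ^ (2 * m)) * √(∫ x : R3, w x ^ 2) := by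
        gcongr
        simpa only [mul_pow] using hle
    _ = √C * ‖ξ‖ ^ (-m) * √(∫ x : R3, w x ^ 2) := by
        rw [sqrt_div' _ (by positivity), show 2 * m = m * (2 : ℕ) by push_cast; ring,
          rpow_mul_natCast hξ0.le, sqrt_sq (by positivity), rpow_neg hξ0.le]
        ring

/-- L² bound for (V(|x|)−1)U(x−ξ) and the resulting bound on the
pairing with an L² function w. -/
theorem potential_perturbation_L2_bound
    (V : ℝ → ℝ) (hmeas : Measurable V) (hbdd : ∃ Cb : ℝ, ∀ ρ ∈ Set.Ioi (0:ℝ), |V ρ| ≤ Cb)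
    (a θ m C_V R₀ : ℝ) (ha : 0 < a) (hθ : 0 < θ) (hm : m ∈ Set.Ioo (0:ℝ) 1)
    (hCV : 0 < C_V) (hR₀ : 0 < R₀)
    (hV : ∀ ρ : ℝ, R₀ ≤ ρ → |V ρ - 1 - a * ρ ^ (-m)| ≤ C_V * ρ ^ (-(m + θ)))
    (U : R3 → ℝ) (hU : Measurable U)
    (C₀ δ : ℝ) (hC₀ : 0 < C₀) (hδ : 0 < δ)
    (hUb : ∀ x : R3, 0 ≤ U x ∧ U x ≤ C₀ * Real.exp (-δ * ‖x‖)) :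
    ∃ C > (0:ℝ), ∀ ξ : R3, max 1 (2 * R₀) ≤ ‖ξ‖ →
      (∫ x : R3, (V ‖x‖ - 1)^2 * (U (x - ξ))^2) ≤ C / ‖ξ‖ ^ (2 * m) ∧
      ∀ w : R3 → ℝ, MeasureTheory.MemLp w 2 MeasureTheory.volume →
        |∫ x : R3, (V ‖x‖ - 1) * U (x - ξ) * w x|
          ≤ Real.sqrt C * ‖ξ‖ ^ (-m) * Real.sqrt (∫ x : R3, (w x)^2) :=
  potential_perturbation_L2_bound_general V hmeas hbdd a θ m C_V R₀ ha hθ hm hCV hV U hU C₀ δ hC₀ hδ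
    hUb
end
end
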